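/- Let σ be a permutation of size n ≥ 2 and let p = (p_1,…,p_n) be a pin representation of σ. The number of distinct pin words associated with p over all admissible origins p_0 is exactly 6 if n ≥ 3 and p_3 satisfies the separation condition (the horizontal or the vertical line through p_3 strictly separates p_2 from p_1), and exactly 8 otherwise. Moreover, for any two admissible origins, the two associated pin words have the same letter in every position i ≥ 3. In particular, every pin-permutation of size at least 2 has at least 6 pin words. -/
import Mathlib


namespace PinStmt

abbrev Point : Type := ℝ × ℝ

inductive Letter : Type
  | n1 | n2 | n3 | n4 | U | D | L | R
deriving DecidableEq

def Letter.isNum : Letter → Bool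
  | .n1 | .n2 | .n3 | .n4 => true
  | _ => false

/-- `c` is one of the numeral letters 1,2,3,4. -/
def Letter.IsNumeral (c : Letter) : Prop := c.isNum = true

/-- `c` is one of the direction letters U,D,L,R. -/
def Letter.IsDirection (c : Letter) : Prop := c.isNum = false

/-- `q i` lies strictly above all of `q 0, …, q (i-1)`. -/
def AboveAll (q : ℕ → Point) (i : ℕ) : Prop := ∀ j < i, (q j).2 < (q i).2
def BelowAll (q : ℕ → Point) (i : ℕ) : Prop := ∀ j < i, (q i).2 < (q j).2
def RightAll (q : ℕ → Point) (i : ℕ) : Prop := ∀ j < i, (q j).1 < (q i).1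
def LeftAll  (q : ℕ → Point) (i : ℕ) : Prop := ∀ j < i, (q i).1 < (q j).1

/-- The vertical line through `q i` strictly separates `q (i-1)` from `{q j | j < i-1}`. -/
def VLineSep (q : ℕ → Point) (i : ℕ) : Prop :=
  ((q (i - 1)).1 < (q i).1 ∧ ∀ j < i - 1, (q i).1 < (q j).1) ∨
  ((q i).1 < (q (i - 1)).1 ∧ ∀ j < i - 1, (q j).1 < (q i).1)

/-- The horizontal line through `q i` strictly separates `q (i-1)` from `{q j | j < i-1}`. -/
def HLineSep (q : ℕ → Point) (i : ℕ) : Prop :=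
  ((q (i - 1)).2 < (q i).2 ∧ ∀ j < i - 1, (q i).2 < (q j).2) ∨
  ((q i).2 < (q (i - 1)).2 ∧ ∀ j < i - 1, (q j).2 < (q i).2)

/-- Separation condition for the pin `q i`. -/
def SepCond (q : ℕ → Point) (i : ℕ) : Prop := VLineSep q i ∨ HLineSep q i

/-- Independence condition: neither line through `q i` splits `{q j | j < i}` in two
nonempty parts. -/
def IndepCond (q : ℕ → Point) (i : ℕ) : Prop :=
  ¬((∃ j < i, (q j).1 < (q i).1) ∧ (∃ j < i, (q i).1 < (q j).1)) ∧
  ¬((∃ j < i, (q j).2 < (q i).2) ∧ (∃ j < i, (q i).2 < (q j).2))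

/-- `q i` lies outside the bounding box of `{q j | j < i}`. -/
def OutsideBox (q : ℕ → Point) (i : ℕ) : Prop :=
  RightAll q i ∨ LeftAll q i ∨ AboveAll q i ∨ BelowAll q i

/-- `(q 0, …, q (m-1))` is a pin sequence. -/
def IsPinSeq (q : ℕ → Point) (m : ℕ) : Prop :=
  (∀ i < m, ∀ j < m, i ≠ j → (q i).1 ≠ (q j).1 ∧ (q i).2 ≠ (q j).2) ∧
  (∀ i, 1 ≤ i → i < m → OutsideBox q i ∧ (SepCond q i ∨ IndepCond q i))

/-- `(p 0, …, p (n-1))` is a pin representation of `σ`, where `f` sends the time index of a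
pin to the position (index) of the corresponding point in the diagram of `σ`. -/
def IsPinReprWith {n : ℕ} (σ : Equiv.Perm (Fin n)) (p : ℕ → Point)
    (f : Fin n ≃ Fin n) : Prop :=
  IsPinSeq p n ∧ ∀ j k : Fin n,
    ((p j.val).1 < (p k.val).1 ↔ f j < f k) ∧
    ((p j.val).2 < (p k.val).2 ↔ σ (f j) < σ (f k))

def IsPinRepr {n : ℕ} (σ : Equiv.Perm (Fin n)) (p : ℕ → Point) : Prop :=
  ∃ f, IsPinReprWith σ p f

/-- `σ` is a pin-permutation. -/
def IsPinPerm {n : ℕ} (σ : Equiv.Perm (Fin n)) : Prop := ∃ p, IsPinRepr σ p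

/-- Prepend the origin `p0` to the sequence of pins `p`. -/
def withOrigin (p0 : Point) (p : ℕ → Point) : ℕ → Point
  | 0 => p0
  | i + 1 => p i

/-- The letter encoding the pin `q i` (where `q 0` is the origin). -/
def LetterIs (q : ℕ → Point) (i : ℕ) : Letter → Prop
  | .U => 2 ≤ i ∧ SepCond q i ∧ AboveAll q i
  | .D => 2 ≤ i ∧ SepCond q i ∧ BelowAll q i
  | .L => 2 ≤ i ∧ SepCond q i ∧ LeftAll q i
  | .R => 2 ≤ i ∧ SepCond q i ∧ RightAll q i
  | .n1 => IndepCond q i ∧ RightAll q i ∧ AboveAll q i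
  | .n2 => IndepCond q i ∧ LeftAll q i ∧ AboveAll q i
  | .n3 => IndepCond q i ∧ LeftAll q i ∧ BelowAll q i
  | .n4 => IndepCond q i ∧ RightAll q i ∧ BelowAll q i

/-- `w` is the pin word associated with the pin sequence `(q 0, q 1, …, q n)`,
whose origin is `q 0`. -/
def WordOf (q : ℕ → Point) (n : ℕ) (w : List Letter) : Prop :=
  w.length = n ∧ ∀ i < n, LetterIs q (i + 1) (w.getD i Letter.U)

/-- `P(σ)`: the set of pin words of the permutation `σ`. -/
def PinWords {n : ℕ} (σ : Equiv.Perm (Fin n)) : Set (List Letter) :=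
  { w | ∃ (p : ℕ → Point) (p0 : Point), IsPinRepr σ p ∧
        IsPinSeq (withOrigin p0 p) (n + 1) ∧ WordOf (withOrigin p0 p) n w }

/-- The set of pin words associated with the fixed pin representation `p`
over all admissible origins. -/
def WordsOfRepr (n : ℕ) (p : ℕ → Point) : Set (List Letter) :=
  { w | ∃ p0 : Point, IsPinSeq (withOrigin p0 p) (n + 1) ∧ WordOf (withOrigin p0 p) n w }

/-- `(p 0, …, p (n-1))` is a proper pin sequence: every pin from the third one on
satisfies the separation condition. -/
def IsProperSeq (p : ℕ → Point) (n : ℕ) : Prop :=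
  IsPinSeq p n ∧ ∀ i, 2 ≤ i → i < n → SepCond p i

/-- `σ` is a proper pin-permutation. -/
def IsProperPinPerm {n : ℕ} (σ : Equiv.Perm (Fin n)) : Prop :=
  ∃ p, IsPinRepr σ p ∧ IsProperSeq p n

/-- A strict pin word: a numeral followed only by directions. -/
def IsStrict (w : List Letter) : Prop :=
  ∃ c cs, w = c :: cs ∧ c.IsNumeral ∧ ∀ d ∈ cs, d.IsDirection

/-- A quasi-strict pin word: two numerals followed only by directions. -/
def IsQuasiStrict (w : List Letter) : Prop :=
  ∃ c₁ c₂ cs, w = c₁ :: c₂ :: cs ∧ c₁.IsNumeral ∧ c₂.IsNumeral ∧ ∀ d ∈ cs, d.IsDirection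

/-- `w` is a pin word (of some permutation). -/
def IsPinWord (w : List Letter) : Prop :=
  ∃ (n : ℕ) (σ : Equiv.Perm (Fin n)), w ∈ PinWords σ

/-- `SP`: the set of strict pin words. -/
def SPset : Set (List Letter) := { w | IsPinWord w ∧ IsStrict w }

def phi2 : Letter → Letter → List Letter
  | .n1, .R => [.R, .U, .R]
  | .n2, .R => [.L, .U, .R]
  | .n3, .R => [.L, .D, .R]
  | .n4, .R => [.R, .D, .R]
  | .n1, .L => [.R, .U, .L]
  | .n2, .L => [.L, .U, .L]
  | .n3, .L => [.L, .D, .L]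
  | .n4, .L => [.R, .D, .L]
  | .n1, .U => [.U, .R, .U]
  | .n2, .U => [.U, .L, .U]
  | .n3, .U => [.D, .L, .U]
  | .n4, .U => [.D, .R, .U]
  | .n1, .D => [.U, .R, .D]
  | .n2, .D => [.U, .L, .D]
  | .n3, .D => [.D, .L, .D]
  | .n4, .D => [.D, .R, .D]
  | _, _ => []

def phi1 : Letter → Set (List Letter)
  | .n1 => {[.U, .R], [.R, .U]}
  | .n2 => {[.U, .L], [.L, .U]}
  | .n3 => {[.D, .L], [.L, .D]}
  | .n4 => {[.R, .D], [.D, .R]}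
  | _ => ∅

def phiInv2 : Letter → Letter → Letter
  | .U, .R => .n1
  | .R, .U => .n1
  | .U, .L => .n2
  | .L, .U => .n2
  | .D, .L => .n3
  | .L, .D => .n3
  | .R, .D => .n4
  | .D, .R => .n4
  | _, _ => .n1

/-- `φ(u)`, as a set of words: a two-element set when `u` is a single numeral,
a singleton `{φ(u)}` when `u` is a strict pin word of length at least 2, and
the identity (as a singleton) on words of `M`. -/
def phiSet : List Letter → Set (List Letter)
  | [] => {[]}
  | [c] => if c.isNum then phi1 c else {[c]}
  | c :: d :: rest => if c.isNum then {phi2 c d ++ rest} else {c :: d :: rest}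

/-- The quadrant numeral `q(c,d)`. -/
def quadNum (c d : Letter) : Letter :=
  if c.isNum then
    match phi2 c d with
    | [_, b, e] => phiInv2 b e
    | _ => Letter.n1
  else phiInv2 c d

/-- `us` is the strong numeral-led factor decomposition of `u`. -/
def IsSNLD (u : List Letter) (us : List (List Letter)) : Prop :=
  us.flatten = u ∧ ∀ v ∈ us, IsStrict v

def interleave : List (List Letter) → List (List Letter) → List Letter
  | [], _ => []
  | v :: vs, [] => v ++ interleave vs []
  | v :: vs, w :: ws => v ++ w ++ interleave vs ws

/-- The condition on the pieces `v^(i)`, `w^(i)`, `u^(i)` in the definition of `≼`. -/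
def PieceCond (v wi ui : List Letter) : Prop :=
  (∃ c cs, wi = c :: cs ∧ c.IsNumeral ∧ wi = ui) ∨
  (∃ d ds c, wi = d :: ds ∧ d.IsDirection ∧ v ≠ [] ∧ v.getLast? = some c ∧
    ui = quadNum c d :: ds)

/-- The order `u ≼ w` on pin words. -/
def PinOrder (u w : List Letter) : Prop :=
  ∃ us, IsSNLD u us ∧
    ∃ vs ws : List (List Letter), ws.length = us.length ∧ vs.length = us.length + 1 ∧
      w = interleave vs ws ∧
      ∀ i < us.length, PieceCond (vs.getD i []) (ws.getD i []) (us.getD i [])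

def IsVert (c : Letter) : Prop := c = Letter.U ∨ c = Letter.D
def IsHoriz (c : Letter) : Prop := c = Letter.L ∨ c = Letter.R

/-- `M`: words over `{U,D,L,R}` of length at least 2 with no factor in
`{UU,UD,DU,DD,LL,LR,RL,RR}`. -/
def MSet : Set (List Letter) :=
  { w | 2 ≤ w.length ∧ (∀ c ∈ w, c.IsDirection) ∧
        ∀ a c : Letter, [a, c] <:+: w →
          ¬(IsVert a ∧ IsVert c) ∧ ¬(IsHoriz a ∧ IsHoriz c) }

/-- `A*`: all words over the direction alphabet `A = {U,D,L,R}`. -/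
def Astar : Set (List Letter) := { w | ∀ c ∈ w, c.IsDirection }

/-- Concatenation of languages. -/
def LMul (X Y : Set (List Letter)) : Set (List Letter) :=
  { w | ∃ x ∈ X, ∃ y ∈ Y, w = x ++ y }

/-- The language `L(u) = A* φ(u^(1)) A* φ(u^(2)) … A* φ(u^(j)) A*`. -/
def LangOf (u : List Letter) : Set (List Letter) :=
  { m | ∃ us, IsSNLD u us ∧
      ∃ vs ws : List (List Letter), ws.length = us.length ∧ vs.length = us.length + 1 ∧
        m = interleave vs ws ∧ (∀ v ∈ vs, v ∈ Astar) ∧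
        ∀ i < us.length, ws.getD i [] ∈ phiSet (us.getD i []) }

/-- The language `L_π = ⋃_{u ∈ P(π)} L(u)`. -/
def Lperm {n : ℕ} (π : Equiv.Perm (Fin n)) : Set (List Letter) :=
  { m | ∃ u ∈ PinWords π, m ∈ LangOf u }

/-- `π ≤ σ`: the permutation `π` is a pattern of the permutation `σ`. -/
def IsPattern {k n : ℕ} (π : Equiv.Perm (Fin k)) (σ : Equiv.Perm (Fin n)) : Prop :=
  ∃ g : Fin k → Fin n, StrictMono g ∧ ∀ a b : Fin k, (π a < π b ↔ σ (g a) < σ (g b))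

/-- `q i` lies in the quadrant (given by a numeral letter) of the bounding box of
`{q j | j < m}`. -/
def InQuadOf (q : ℕ → Point) (i m : ℕ) : Letter → Prop
  | .n1 => (∀ j < m, (q j).1 < (q i).1) ∧ (∀ j < m, (q j).2 < (q i).2)
  | .n2 => (∀ j < m, (q i).1 < (q j).1) ∧ (∀ j < m, (q j).2 < (q i).2)
  | .n3 => (∀ j < m, (q i).1 < (q j).1) ∧ (∀ j < m, (q i).2 < (q j).2)
  | .n4 => (∀ j < m, (q j).1 < (q i).1) ∧ (∀ j < m, (q i).2 < (q j).2)
  | _ => False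


/-- `σ = ⊕[π_0, …, π_(r-1)]` where the `k`-th child occupies positions and values
`[b k, b (k+1))`. -/
def SumDecomp {n : ℕ} (σ : Equiv.Perm (Fin n)) (r : ℕ) (b : ℕ → ℕ) : Prop :=
  b 0 = 0 ∧ b r = n ∧ (∀ k < r, b k < b (k + 1)) ∧
  ∀ k < r, ∀ i : Fin n, b k ≤ i.val → i.val < b (k + 1) →
    b k ≤ (σ i).val ∧ (σ i).val < b (k + 1)

/-- The child of `σ` occupying positions `[lo, hi)` is ⊕-indecomposable. -/
def ChildIndecomp {n : ℕ} (σ : Equiv.Perm (Fin n)) (lo hi : ℕ) : Prop :=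
  ¬ ∃ m, lo < m ∧ m < hi ∧ ∀ i : Fin n, lo ≤ i.val → i.val < m → (σ i).val < m

/-- The pin read at time `a` belongs to the `k`-th child (`f` sends times to positions). -/
def PinInChild {n : ℕ} (b : ℕ → ℕ) (f : Fin n ≃ Fin n) (a : Fin n) (k : ℕ) : Prop :=
  b k ≤ (f a).val ∧ (f a).val < b (k + 1)

/-- The set of (times of) pins belonging to the `k`-th child. -/
def ChildPins {n : ℕ} (b : ℕ → ℕ) (f : Fin n ≃ Fin n) (k : ℕ) : Set (Fin n) :=
  { a | PinInChild b f a k }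

/-- The starting times of the maximal runs of consecutive reading times in `S`. -/
def PieceStarts {n : ℕ} (S : Set (Fin n)) : Set (Fin n) :=
  { a | a ∈ S ∧ ∀ c : Fin n, c.val + 1 = a.val → c ∉ S }

/-- `S` is read in exactly `k` pieces. -/
def ReadInPieces {n : ℕ} (S : Set (Fin n)) (k : ℕ) : Prop := (PieceStarts S).ncard = k

/-- The pins of `D` are all read before the pins of `C`. -/
def ReadBefore {n : ℕ} (D C : Set (Fin n)) : Prop := ∀ a ∈ D, ∀ c ∈ C, a < c

/-- The infinite oscillating sequence `ω = 3 1 5 2 7 4 9 6 …` (1-indexed). -/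
def omegaSeq (i : ℕ) : ℕ := if i = 2 then 1 else if i % 2 = 1 then i + 2 else i - 2

/-- `π` is a pattern of some prefix of the infinite oscillating sequence `ω`. -/
def IsOmegaPattern {k : ℕ} (π : Equiv.Perm (Fin k)) : Prop :=
  ∃ g : Fin k → ℕ, StrictMono g ∧ (∀ a, 1 ≤ g a) ∧
    ∀ a b : Fin k, (π a < π b ↔ omegaSeq (g a) < omegaSeq (g b))

/-- The interval of positions `[lo, lo+len)` is a block of `σ`. -/
def IsBlockOf {n : ℕ} (σ : Equiv.Perm (Fin n)) (lo len : ℕ) : Prop :=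
  lo + len ≤ n ∧ ∃ vlo, ∀ i : Fin n,
    (lo ≤ i.val ∧ i.val < lo + len) ↔ (vlo ≤ (σ i).val ∧ (σ i).val < vlo + len)

/-- `σ` is a simple permutation. -/
def IsSimplePerm {n : ℕ} (σ : Equiv.Perm (Fin n)) : Prop :=
  4 ≤ n ∧ ∀ lo len, IsBlockOf σ lo len → len ≤ 1 ∨ len = n

/-- `π` is the permutation whose one-line notation is the list `l`. -/
def PermMatches {k : ℕ} (π : Equiv.Perm (Fin k)) (l : List ℕ) : Prop :=
  l.length = k ∧ ∀ i : Fin k, (π i).val + 1 = l.getD i.val 0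

/-- `ξ` is an increasing oscillation. -/
def IsIncrOsc {k : ℕ} (ξ : Equiv.Perm (Fin k)) : Prop :=
  PermMatches ξ [1] ∨ PermMatches ξ [2, 1] ∨ PermMatches ξ [2, 3, 1] ∨
  PermMatches ξ [3, 1, 2] ∨ (4 ≤ k ∧ IsSimplePerm ξ ∧ IsOmegaPattern ξ)

/-- The child of `σ` occupying positions `[lo, hi)` is order-isomorphic to `ξ`. -/
def ChildIsPerm {n m : ℕ} (σ : Equiv.Perm (Fin n)) (lo hi : ℕ)
    (ξ : Equiv.Perm (Fin m)) : Prop :=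
  lo + m = hi ∧ ∀ (a c : Fin m) (ia ic : Fin n), ia.val = lo + a.val → ic.val = lo + c.val →
    ((σ ia).val < (σ ic).val ↔ (ξ a).val < (ξ c).val)

/-- The child of `σ` occupying positions `[lo, hi)` is an increasing oscillation. -/
def ChildIsIncrOsc {n : ℕ} (σ : Equiv.Perm (Fin n)) (lo hi : ℕ) : Prop :=
  ∃ (m : ℕ) (ξ : Equiv.Perm (Fin m)), IsIncrOsc ξ ∧ ChildIsPerm σ lo hi ξ

/-- `τ = ⊕[ξ, η]`. -/
def IsDSum2 {m k l : ℕ} (τ : Equiv.Perm (Fin m)) (ξ : Equiv.Perm (Fin k))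
    (η : Equiv.Perm (Fin l)) : Prop :=
  m = k + l ∧ (∀ i : Fin m, i.val < k → (τ i).val < k) ∧
    ChildIsPerm τ 0 k ξ ∧ ChildIsPerm τ k m η

/-- The origin `p0` lies in quadrant 1 of the bounding box of `{p j | j < n}`. -/
def OriginQ1 (p0 : Point) (p : ℕ → Point) (n : ℕ) : Prop :=
  ∀ j < n, (p j).1 < p0.1 ∧ (p j).2 < p0.2

/-- The origin `p0` lies in quadrant 3 of the bounding box of `{p j | j < n}`. -/
def OriginQ3 (p0 : Point) (p : ℕ → Point) (n : ℕ) : Prop :=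
  ∀ j < n, p0.1 < (p j).1 ∧ p0.2 < (p j).2

/-- `P^(1)(ξ)`: pin words of `ξ` whose origin lies in quadrant 1 w.r.t. the points of `ξ`. -/
def PinWordsQ1 {n : ℕ} (ξ : Equiv.Perm (Fin n)) : Set (List Letter) :=
  { w | ∃ (p : ℕ → Point) (p0 : Point), IsPinRepr ξ p ∧
        IsPinSeq (withOrigin p0 p) (n + 1) ∧ WordOf (withOrigin p0 p) n w ∧ OriginQ1 p0 p n }

/-- `P^(3)(ξ)`: pin words of `ξ` whose origin lies in quadrant 3 w.r.t. the points of `ξ`. -/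
def PinWordsQ3 {n : ℕ} (ξ : Equiv.Perm (Fin n)) : Set (List Letter) :=
  { w | ∃ (p : ℕ → Point) (p0 : Point), IsPinRepr ξ p ∧
        IsPinSeq (withOrigin p0 p) (n + 1) ∧ WordOf (withOrigin p0 p) n w ∧ OriginQ3 p0 p n }

/-- The shuffle product of two sequences of sets of words. -/
def ShuffleSeq : List (Set (List Letter)) → List (Set (List Letter)) → Set (List Letter)
  | [], [] => {[]}
  | X :: As, [] => { w | ∃ x ∈ X, ∃ t ∈ ShuffleSeq As [], w = x ++ t }
  | [], Y :: Bs => { w | ∃ y ∈ Y, ∃ t ∈ ShuffleSeq ([] : List (Set (List Letter))) Bs, w = y ++ t }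
  | X :: As, Y :: Bs =>
      { w | (∃ x ∈ X, ∃ t ∈ ShuffleSeq As (Y :: Bs), w = x ++ t) ∨
            (∃ y ∈ Y, ∃ t ∈ ShuffleSeq (X :: As) Bs, w = y ++ t) }
  termination_by A B => A.length + B.length

/-- The `p`-fold repetition `x^p` of the word `x`. -/
def repW (p : ℕ) (x : List Letter) : List Letter := (List.replicate p x).flatten

/-- The points of `ξ` at positions `i` and `j` form an active knight of `ξ`:
they occur (in some order) as the first two pins of some pin representation of `ξ`. -/
def ActiveKnight {k : ℕ} (ξ : Equiv.Perm (Fin k)) (i j : Fin k) : Prop :=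
  ∃ (p : ℕ → Point) (f : Fin k ≃ Fin k) (h2 : 2 ≤ k),
    IsPinReprWith ξ p f ∧
    ((f ⟨0, by omega⟩ = i ∧ f ⟨1, by omega⟩ = j) ∨
     (f ⟨0, by omega⟩ = j ∧ f ⟨1, by omega⟩ = i))

/-- The points at positions `i`, `j` are in horizontal knight position. -/
def KnightH {k : ℕ} (ξ : Equiv.Perm (Fin k)) (i j : Fin k) : Prop :=
  (i.val + 2 = j.val ∨ j.val + 2 = i.val) ∧
  ((ξ i).val + 1 = (ξ j).val ∨ (ξ j).val + 1 = (ξ i).val)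

/-- The points at positions `i`, `j` are in vertical knight position. -/
def KnightV {k : ℕ} (ξ : Equiv.Perm (Fin k)) (i j : Fin k) : Prop :=
  (i.val + 1 = j.val ∨ j.val + 1 = i.val) ∧
  ((ξ i).val + 2 = (ξ j).val ∨ (ξ j).val + 2 = (ξ i).val)

inductive KType : Type
  | H | V

def KnightOfType {k : ℕ} (t : KType) (ξ : Equiv.Perm (Fin k)) (i j : Fin k) : Prop :=
  match t with
  | .H => KnightH ξ i j
  | .V => KnightV ξ i j

/-- The increasing oscillation `ξ` has type `(x, y)`: its lower-left active knight
(the one containing the leftmost point) has knight-position type `x` and its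
upper-right active knight (the one containing the rightmost point) has type `y`. -/
def HasOscType {k : ℕ} (ξ : Equiv.Perm (Fin k)) (x y : KType) : Prop :=
  ∃ i j i' j' : Fin k, ActiveKnight ξ i j ∧ ActiveKnight ξ i' j' ∧
    i.val = 0 ∧ j'.val + 1 = k ∧ KnightOfType x ξ i j ∧ KnightOfType y ξ i' j'

/-- The permutation 21. -/
def perm21 : Equiv.Perm (Fin 2) := Equiv.swap 0 1

/-- The permutation 12. -/
def perm12 : Equiv.Perm (Fin 2) := Equiv.refl (Fin 2)

def EndsH (w : List Letter) : Prop := w.getLast? = some Letter.R ∨ w.getLast? = some Letter.L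
def EndsV (w : List Letter) : Prop := w.getLast? = some Letter.U ∨ w.getLast? = some Letter.D

/-- `Q⁻`: quasi-strict pin words of 21. -/
def Qminus : Set (List Letter) := { w | w ∈ PinWords perm21 ∧ IsQuasiStrict w }
/-- `S⁻_H`: strict pin words of 21 ending with R or L. -/
def SminusH : Set (List Letter) := { w | w ∈ PinWords perm21 ∧ IsStrict w ∧ EndsH w }
/-- `S⁻_V`: strict pin words of 21 ending with U or D. -/
def SminusV : Set (List Letter) := { w | w ∈ PinWords perm21 ∧ IsStrict w ∧ EndsV w }
/-- `Q⁺`: quasi-strict pin words of 12. -/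
def Qplus : Set (List Letter) := { w | w ∈ PinWords perm12 ∧ IsQuasiStrict w }
/-- `S⁺_H`: strict pin words of 12 ending with R or L. -/
def SplusH : Set (List Letter) := { w | w ∈ PinWords perm12 ∧ IsStrict w ∧ EndsH w }
/-- `S⁺_V`: strict pin words of 12 ending with U or D. -/
def SplusV : Set (List Letter) := { w | w ∈ PinWords perm12 ∧ IsStrict w ∧ EndsV w }

/-- `P^mix(ξ_i, ξ_j)` for `τ = ⊕[ξ_i, ξ_j]` with `|ξ_i| = s1`: pin words associated
with a pin representation of `τ` reading one of the two children in two pieces. -/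
def Pmix {m : ℕ} (τ : Equiv.Perm (Fin m)) (s1 : ℕ) : Set (List Letter) :=
  { w | ∃ (p : ℕ → Point) (p0 : Point) (f : Fin m ≃ Fin m),
      IsPinReprWith τ p f ∧ IsPinSeq (withOrigin p0 p) (m + 1) ∧
      WordOf (withOrigin p0 p) m w ∧
      (ReadInPieces { a : Fin m | (f a).val < s1 } 2 ∨
       ReadInPieces { a : Fin m | s1 ≤ (f a).val } 2) }

/-- The set of words `{13, 23, 33, 43, 1D, 4D}`. -/
def W13D : Set (List Letter) :=
  {[Letter.n1, Letter.n3], [Letter.n2, Letter.n3], [Letter.n3, Letter.n3],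
   [Letter.n4, Letter.n3], [Letter.n1, Letter.D], [Letter.n4, Letter.D]}

/-- The set of words `{13, 23, 33, 43, 1L, 2L}`. -/
def W13L : Set (List Letter) :=
  {[Letter.n1, Letter.n3], [Letter.n2, Letter.n3], [Letter.n3, Letter.n3],
   [Letter.n4, Letter.n3], [Letter.n1, Letter.L], [Letter.n2, Letter.L]}

/-- `M_2 = {UR, UL, DR, DL, RU, RD, LU, LD}`. -/
def M2Set : Set (List Letter) :=
  {[Letter.U, Letter.R], [Letter.U, Letter.L], [Letter.D, Letter.R], [Letter.D, Letter.L],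
   [Letter.R, Letter.U], [Letter.R, Letter.D], [Letter.L, Letter.U], [Letter.L, Letter.D]}

/-- `E^s_π`: the words `φ(u)` for `u ∈ P(π)` strict. -/
def EsSet {n : ℕ} (π : Equiv.Perm (Fin n)) : Set (List Letter) :=
  { v | ∃ u ∈ PinWords π, IsStrict u ∧ v ∈ phiSet u }

/-- `E^qs_π`: the words `φ(u^(2))` for `u = u^(1)u^(2) ∈ P(π)` quasi-strict. -/
def EqsSet {n : ℕ} (π : Equiv.Perm (Fin n)) : Set (List Letter) :=
  { v | ∃ u ∈ PinWords π, IsQuasiStrict u ∧ ∃ u1 u2, IsSNLD u [u1, u2] ∧ v ∈ phiSet u2 }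


/-! ### Auxiliary development for statement_0 -/

section Aux

@[simp] lemma wo_zero (o : Point) (p : ℕ → Point) : withOrigin o p 0 = o := rfl
@[simp] lemma wo_succ (o : Point) (p : ℕ → Point) (j : ℕ) : withOrigin o p (j+1) = p j := rfl

def sigR : Letter → Bool | .n1 => true | .n4 => true | .R => true | _ => false
def sigL : Letter → Bool | .n2 => true | .n3 => true | .L => true | _ => false
def sigA : Letter → Bool | .n1 => true | .n2 => true | .U => true | _ => false
def sigB : Letter → Bool | .n3 => true | .n4 => true | .D => true | _ => false

lemma not_right_left {r : ℕ → Point} {i : ℕ} (h0 : 0 < i)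
    (hR : RightAll r i) (hL : LeftAll r i) : False := by
  have := hR 0 h0; have := hL 0 h0; linarith

lemma not_above_below {r : ℕ → Point} {i : ℕ} (h0 : 0 < i)
    (hA : AboveAll r i) (hB : BelowAll r i) : False := by
  have := hA 0 h0; have := hB 0 h0; linarith

lemma not_vsep_right {r : ℕ → Point} {i : ℕ} (h2 : 2 ≤ i)
    (hV : VLineSep r i) (hR : RightAll r i) : False := by
  rcases hV with ⟨h1, hj⟩ | ⟨h1, hj⟩
  · have := hj 0 (by omega); have := hR 0 (by omega); linarith
  · have := hR (i-1) (by omega); linarith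

lemma not_vsep_left {r : ℕ → Point} {i : ℕ} (h2 : 2 ≤ i)
    (hV : VLineSep r i) (hL : LeftAll r i) : False := by
  rcases hV with ⟨h1, hj⟩ | ⟨h1, hj⟩
  · have := hL (i-1) (by omega); linarith
  · have := hj 0 (by omega); have := hL 0 (by omega); linarith

lemma not_hsep_above {r : ℕ → Point} {i : ℕ} (h2 : 2 ≤ i)
    (hH : HLineSep r i) (hA : AboveAll r i) : False := by
  rcases hH with ⟨h1, hj⟩ | ⟨h1, hj⟩
  · have := hj 0 (by omega); have := hA 0 (by omega); linarith
  · have := hA (i-1) (by omega); linarith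

lemma not_hsep_below {r : ℕ → Point} {i : ℕ} (h2 : 2 ≤ i)
    (hH : HLineSep r i) (hB : BelowAll r i) : False := by
  rcases hH with ⟨h1, hj⟩ | ⟨h1, hj⟩
  · have := hB (i-1) (by omega); linarith
  · have := hj 0 (by omega); have := hB 0 (by omega); linarith

lemma letter_sig {r : ℕ → Point} {i : ℕ} (h2 : 2 ≤ i) {l : Letter} (h : LetterIs r i l) :
    (RightAll r i ↔ sigR l = true) ∧ (LeftAll r i ↔ sigL l = true) ∧
    (AboveAll r i ↔ sigA l = true) ∧ (BelowAll r i ↔ sigB l = true) := by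
  have h0 : 0 < i := by omega
  cases l with
  | n1 =>
    obtain ⟨hi, hr, ha⟩ := h
    exact ⟨by simp [sigR, hr], by simp [sigL]; exact fun hL => not_right_left h0 hr hL,
      by simp [sigA, ha], by simp [sigB]; exact fun hB => not_above_below h0 ha hB⟩
  | n2 =>
    obtain ⟨hi, hl, ha⟩ := h
    exact ⟨by simp [sigR]; exact fun hR => not_right_left h0 hR hl, by simp [sigL, hl],
      by simp [sigA, ha], by simp [sigB]; exact fun hB => not_above_below h0 ha hB⟩
  | n3 =>
    obtain ⟨hi, hl, hb⟩ := h
    exact ⟨by simp [sigR]; exact fun hR => not_right_left h0 hR hl, by simp [sigL, hl],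
      by simp [sigA]; exact fun hA => not_above_below h0 hA hb, by simp [sigB, hb]⟩
  | n4 =>
    obtain ⟨hi, hr, hb⟩ := h
    exact ⟨by simp [sigR, hr], by simp [sigL]; exact fun hL => not_right_left h0 hr hL,
      by simp [sigA]; exact fun hA => not_above_below h0 hA hb, by simp [sigB, hb]⟩
  | U =>
    obtain ⟨hi, hs, ha⟩ := h
    have hnR : ¬ RightAll r i := by
      intro hR; rcases hs with hV | hH
      · exact not_vsep_right h2 hV hR
      · exact not_hsep_above h2 hH ha
    have hnL : ¬ LeftAll r i := by
      intro hL; rcases hs with hV | hH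
      · exact not_vsep_left h2 hV hL
      · exact not_hsep_above h2 hH ha
    exact ⟨by simp [sigR, hnR], by simp [sigL, hnL], by simp [sigA, ha],
      by simp [sigB]; exact fun hB => not_above_below h0 ha hB⟩
  | D =>
    obtain ⟨hi, hs, hb⟩ := h
    have hnR : ¬ RightAll r i := by
      intro hR; rcases hs with hV | hH
      · exact not_vsep_right h2 hV hR
      · exact not_hsep_below h2 hH hb
    have hnL : ¬ LeftAll r i := by
      intro hL; rcases hs with hV | hH
      · exact not_vsep_left h2 hV hL
      · exact not_hsep_below h2 hH hb
    exact ⟨by simp [sigR, hnR], by simp [sigL, hnL],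
      by simp [sigA]; exact fun hA => not_above_below h0 hA hb, by simp [sigB, hb]⟩
  | L =>
    obtain ⟨hi, hs, hl⟩ := h
    have hnA : ¬ AboveAll r i := by
      intro hA; rcases hs with hV | hH
      · exact not_vsep_left h2 hV hl
      · exact not_hsep_above h2 hH hA
    have hnB : ¬ BelowAll r i := by
      intro hB; rcases hs with hV | hH
      · exact not_vsep_left h2 hV hl
      · exact not_hsep_below h2 hH hB
    exact ⟨by simp [sigR]; exact fun hR => not_right_left h0 hR hl, by simp [sigL, hl],
      by simp [sigA, hnA], by simp [sigB, hnB]⟩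
  | R =>
    obtain ⟨hi, hs, hr⟩ := h
    have hnA : ¬ AboveAll r i := by
      intro hA; rcases hs with hV | hH
      · exact not_vsep_right h2 hV hr
      · exact not_hsep_above h2 hH hA
    have hnB : ¬ BelowAll r i := by
      intro hB; rcases hs with hV | hH
      · exact not_vsep_right h2 hV hr
      · exact not_hsep_below h2 hH hB
    exact ⟨by simp [sigR, hr], by simp [sigL]; exact fun hL => not_right_left h0 hr hL,
      by simp [sigA, hnA], by simp [sigB, hnB]⟩

lemma unique_letter {r : ℕ → Point} {i : ℕ} (h2 : 2 ≤ i) {l l' : Letter}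
    (h : LetterIs r i l) (h' : LetterIs r i l') : l = l' := by
  obtain ⟨r1, l1, a1, b1⟩ := letter_sig h2 h
  obtain ⟨r2, l2, a2, b2⟩ := letter_sig h2 h'
  have eR : sigR l = sigR l' := by
    cases hl : sigR l <;> cases hl' : sigR l' <;> simp_all
  have eL : sigL l = sigL l' := by
    cases hl : sigL l <;> cases hl' : sigL l' <;> simp_all
  have eA : sigA l = sigA l' := by
    cases hl : sigA l <;> cases hl' : sigA l' <;> simp_all
  have eB : sigB l = sigB l' := by
    cases hl : sigB l <;> cases hl' : sigB l' <;> simp_all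
  clear r1 l1 a1 b1 r2 l2 a2 b2 h h'
  cases l <;> cases l' <;> simp_all [sigR, sigL, sigA, sigB]

lemma letter_ok {r : ℕ → Point} {i : ℕ} {l : Letter} (h : LetterIs r i l) :
    OutsideBox r i ∧ (SepCond r i ∨ IndepCond r i) := by
  cases l with
  | n1 => exact ⟨Or.inl h.2.1, Or.inr h.1⟩
  | n2 => exact ⟨Or.inr (Or.inl h.2.1), Or.inr h.1⟩
  | n3 => exact ⟨Or.inr (Or.inl h.2.1), Or.inr h.1⟩
  | n4 => exact ⟨Or.inl h.2.1, Or.inr h.1⟩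
  | U => exact ⟨Or.inr (Or.inr (Or.inl h.2.2)), Or.inl h.2.1⟩
  | D => exact ⟨Or.inr (Or.inr (Or.inr h.2.2)), Or.inl h.2.1⟩
  | L => exact ⟨Or.inr (Or.inl h.2.2), Or.inl h.2.1⟩
  | R => exact ⟨Or.inl h.2.2, Or.inl h.2.1⟩

lemma exists_letter {r : ℕ → Point} {i : ℕ} (h2 : 2 ≤ i)
    (hout : OutsideBox r i) (hsi : SepCond r i ∨ IndepCond r i)
    (hd : ∀ j < i, (r j).1 ≠ (r i).1 ∧ (r j).2 ≠ (r i).2) :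
    ∃ l, LetterIs r i l := by
  rcases hsi with hs | hind
  · rcases hout with hR | hL | hA | hB
    · exact ⟨.R, h2, hs, hR⟩
    · exact ⟨.L, h2, hs, hL⟩
    · exact ⟨.U, h2, hs, hA⟩
    · exact ⟨.D, h2, hs, hB⟩
  · have hx : RightAll r i ∨ LeftAll r i := by
      by_cases hR : RightAll r i
      · exact Or.inl hR
      · right
        simp only [RightAll, not_forall] at hR
        obtain ⟨j0, hj0, hnlt⟩ := hR
        have hgt : (r i).1 < (r j0).1 := by
          rcases lt_or_gt_of_ne (hd j0 hj0).1 with hh | hh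
          · exact absurd hh (by simpa using hnlt)
          · exact hh
        intro j hj
        by_contra hng
        have hlt : (r j).1 < (r i).1 := by
          rcases lt_or_gt_of_ne (hd j hj).1 with hh | hh
          · exact hh
          · exact absurd hh hng
        exact hind.1 ⟨⟨j, hj, hlt⟩, ⟨j0, hj0, hgt⟩⟩
    have hy : AboveAll r i ∨ BelowAll r i := by
      by_cases hA : AboveAll r i
      · exact Or.inl hA
      · right
        simp only [AboveAll, not_forall] at hA
        obtain ⟨j0, hj0, hnlt⟩ := hA
        have hgt : (r i).2 < (r j0).2 := by
          rcases lt_or_gt_of_ne (hd j0 hj0).2 with hh | hh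
          · exact absurd hh (by simpa using hnlt)
          · exact hh
        intro j hj
        by_contra hng
        have hlt : (r j).2 < (r i).2 := by
          rcases lt_or_gt_of_ne (hd j hj).2 with hh | hh
          · exact hh
          · exact absurd hh hng
        exact hind.2 ⟨⟨j, hj, hlt⟩, ⟨j0, hj0, hgt⟩⟩
    rcases hx with hR | hL <;> rcases hy with hA | hB
    · exact ⟨.n1, hind, hR, hA⟩
    · exact ⟨.n4, hind, hR, hB⟩
    · exact ⟨.n2, hind, hL, hA⟩
    · exact ⟨.n3, hind, hL, hB⟩

end Aux

section Push

variable {o : Point} {p : ℕ → Point}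

lemma push_above {k : ℕ} (h : AboveAll (withOrigin o p) (k+1)) : AboveAll p k :=
  fun j hj => h (j+1) (by omega)

lemma push_below {k : ℕ} (h : BelowAll (withOrigin o p) (k+1)) : BelowAll p k :=
  fun j hj => h (j+1) (by omega)

lemma push_right {k : ℕ} (h : RightAll (withOrigin o p) (k+1)) : RightAll p k :=
  fun j hj => h (j+1) (by omega)

lemma push_left {k : ℕ} (h : LeftAll (withOrigin o p) (k+1)) : LeftAll p k :=
  fun j hj => h (j+1) (by omega)

lemma push_vsep {k : ℕ} (h : VLineSep (withOrigin o p) (k+2)) : VLineSep p (k+1) := by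
  rcases h with ⟨h1, hj⟩ | ⟨h1, hj⟩
  · exact Or.inl ⟨h1, fun j hjlt => hj (j+1) (by omega)⟩
  · exact Or.inr ⟨h1, fun j hjlt => hj (j+1) (by omega)⟩

lemma push_hsep {k : ℕ} (h : HLineSep (withOrigin o p) (k+2)) : HLineSep p (k+1) := by
  rcases h with ⟨h1, hj⟩ | ⟨h1, hj⟩
  · exact Or.inl ⟨h1, fun j hjlt => hj (j+1) (by omega)⟩
  · exact Or.inr ⟨h1, fun j hjlt => hj (j+1) (by omega)⟩

lemma push_indep {k : ℕ} (h : IndepCond (withOrigin o p) (k+1)) : IndepCond p k := by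
  constructor
  · rintro ⟨⟨j1, hj1, h1⟩, ⟨j2, hj2, h2⟩⟩
    exact h.1 ⟨⟨j1+1, by omega, h1⟩, ⟨j2+1, by omega, h2⟩⟩
  · rintro ⟨⟨j1, hj1, h1⟩, ⟨j2, hj2, h2⟩⟩
    exact h.2 ⟨⟨j1+1, by omega, h1⟩, ⟨j2+1, by omega, h2⟩⟩

lemma push_letter {k : ℕ} {l : Letter}
    (h : LetterIs (withOrigin o p) (k+3) l) : LetterIs p (k+2) l := by
  cases l with
  | n1 => exact ⟨push_indep h.1, push_right h.2.1, push_above h.2.2⟩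
  | n2 => exact ⟨push_indep h.1, push_left h.2.1, push_above h.2.2⟩
  | n3 => exact ⟨push_indep h.1, push_left h.2.1, push_below h.2.2⟩
  | n4 => exact ⟨push_indep h.1, push_right h.2.1, push_below h.2.2⟩
  | U => exact ⟨by omega, h.2.1.elim (fun hv => Or.inl (push_vsep (k := k+1) hv))
      (fun hh => Or.inr (push_hsep (k := k+1) hh)), push_above h.2.2⟩
  | D => exact ⟨by omega, h.2.1.elim (fun hv => Or.inl (push_vsep (k := k+1) hv))
      (fun hh => Or.inr (push_hsep (k := k+1) hh)), push_below h.2.2⟩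
  | L => exact ⟨by omega, h.2.1.elim (fun hv => Or.inl (push_vsep (k := k+1) hv))
      (fun hh => Or.inr (push_hsep (k := k+1) hh)), push_left h.2.2⟩
  | R => exact ⟨by omega, h.2.1.elim (fun hv => Or.inl (push_vsep (k := k+1) hv))
      (fun hh => Or.inr (push_hsep (k := k+1) hh)), push_right h.2.2⟩

lemma words_agree {n : ℕ} {p : ℕ → Point} {w w' : List Letter}
    (hw : w ∈ WordsOfRepr n p) (hw' : w' ∈ WordsOfRepr n p) :
    ∀ i, 2 ≤ i → i < n → w.getD i Letter.U = w'.getD i Letter.U := by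
  obtain ⟨e, hpin, hlen, hlet⟩ := hw
  obtain ⟨e', hpin', hlen', hlet'⟩ := hw'
  intro i h2 hin
  obtain ⟨k, rfl⟩ : ∃ k, i = k + 2 := ⟨i - 2, by omega⟩
  exact unique_letter (r := p) (by omega)
    (push_letter (hlet (k+2) hin)) (push_letter (hlet' (k+2) hin))

end Push

section Gap

lemma exists_adj_gt (g : ℕ → ℝ) (n t : ℕ) (hd : ∀ j < n, j ≠ t → g j ≠ g t) :
    ∃ x, g t < x ∧ (∀ j < n, x ≠ g j) ∧ ∀ j < n, j ≠ t → (x < g j ↔ g t < g j) := by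
  classical
  set S : Finset ℕ := (Finset.range n).filter (fun j => g t < g j) with hS
  by_cases hne : S.Nonempty
  · set m := S.inf' hne g with hm
    have hmgt : g t < m := by
      rw [hm, Finset.lt_inf'_iff]
      intro b hb
      exact (Finset.mem_filter.1 hb).2
    refine ⟨(g t + m)/2, by linarith, ?_, ?_⟩
    · intro j hj
      rcases lt_trichotomy (g t) (g j) with h | h | h
      · have hjS : j ∈ S := Finset.mem_filter.2 ⟨Finset.mem_range.2 hj, h⟩
        have := Finset.inf'_le g hjS
        intro he; rw [← hm] at this; linarith
      · by_cases hjt : j = t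
        · subst hjt; intro he; linarith
        · exact absurd h.symm (hd j hj hjt)
      · intro he; linarith
    · intro j hj hjt
      constructor
      · intro hx
        by_contra hng
        have : g j < g t := lt_of_le_of_ne (not_lt.1 hng) (hd j hj hjt)
        linarith
      · intro hg
        have hjS : j ∈ S := Finset.mem_filter.2 ⟨Finset.mem_range.2 hj, hg⟩
        have := Finset.inf'_le g hjS
        rw [← hm] at this; linarith
  · have hle : ∀ j < n, ¬ g t < g j := by
      intro j hj hgt
      exact hne ⟨j, Finset.mem_filter.2 ⟨Finset.mem_range.2 hj, hgt⟩⟩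
    refine ⟨g t + 1, by linarith, ?_, ?_⟩
    · intro j hj he
      exact hle j hj (by rw [← he]; linarith)
    · intro j hj hjt
      have h1 : g j ≤ g t := not_lt.1 (hle j hj)
      constructor
      · intro hx; linarith
      · intro hg; exact absurd hg (hle j hj)

lemma exists_adj_lt (g : ℕ → ℝ) (n t : ℕ) (hd : ∀ j < n, j ≠ t → g j ≠ g t) :
    ∃ x, x < g t ∧ (∀ j < n, x ≠ g j) ∧ ∀ j < n, j ≠ t → (x < g j ↔ g t < g j) := by
  obtain ⟨y, hy1, hy2, hy3⟩ := exists_adj_gt (fun j => -(g j)) n t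
    (fun j hj hjt h => hd j hj hjt (by linarith [neg_injective h]))
  simp only [neg_lt_neg_iff] at hy1 hy2 hy3
  refine ⟨-y, by linarith, fun j hj h => hy2 j hj (by rw [← h]; ring), ?_⟩
  intro j hj hjt
  have h3 := hy3 j hj hjt
  have hne : -y ≠ g j := fun h => hy2 j hj (by rw [← h]; ring)
  constructor
  · intro h
    by_contra hng
    have h5 : g j < g t := lt_of_le_of_ne (not_lt.1 hng) (hd j hj hjt)
    have h6 : y < -(g j) := h3.2 h5
    linarith
  · intro h
    by_contra hng
    have h5 : g j < -y := lt_of_le_of_ne (not_lt.1 hng) (fun e => hne e.symm)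
    have h6 : y < -(g j) := by linarith
    have := h3.1 h6
    linarith

end Gap

section Transfer

def AdjR (g : ℕ → ℝ) (n : ℕ) (x : ℝ) (t : ℕ) : Prop :=
  (∀ j < n, x ≠ g j) ∧ ∀ j < n, j ≠ t → (x < g j ↔ g t < g j)

lemma adjr_gt {g : ℕ → ℝ} {n : ℕ} {x : ℝ} {t : ℕ} (h : AdjR g n x t) {j : ℕ}
    (hj : j < n) (hjt : j ≠ t) (hne : g j ≠ g t) : (g j < x ↔ g j < g t) := by
  have h1 := h.2 j hj hjt
  have h2 := h.1 j hj
  rcases lt_or_gt_of_ne hne with hlt | hgt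
  · have hnx : ¬ x < g j := fun hx => absurd (h1.1 hx) (not_lt.2 hlt.le)
    have : g j < x := lt_of_le_of_ne (not_lt.1 hnx) (fun e => h2 e.symm)
    exact iff_of_true this hlt
  · have : x < g j := h1.2 hgt
    exact iff_of_false (by linarith) (by linarith)

variable {n : ℕ} {p : ℕ → Point} {o : Point} {tx ty : ℕ}

lemma dist_x (hps : IsPinSeq p n) {i j : ℕ} (hi : i < n) (hj : j < n) (hij : i ≠ j) :
    (p i).1 ≠ (p j).1 := (hps.1 i hi j hj hij).1

lemma dist_y (hps : IsPinSeq p n) {i j : ℕ} (hi : i < n) (hj : j < n) (hij : i ≠ j) :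
    (p i).2 ≠ (p j).2 := (hps.1 i hi j hj hij).2

lemma tr_right (hax : AdjR (fun j => (p j).1) n o.1 tx) {i : ℕ} (hin : i < n)
    (hti : tx < i) (hit : i ≠ tx) (h : RightAll p i) :
    RightAll (withOrigin o p) (i+1) := by
  intro j hj
  cases j with
  | zero => exact (hax.2 i hin hit).2 (h tx hti)
  | succ j => exact h j (by omega)

lemma tr_left (hax : AdjR (fun j => (p j).1) n o.1 tx) {i : ℕ} (hin : i < n)
    (hti : tx < i) (hit : i ≠ tx) (hne : (p i).1 ≠ (p tx).1) (h : LeftAll p i) :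
    LeftAll (withOrigin o p) (i+1) := by
  intro j hj
  cases j with
  | zero => exact (adjr_gt hax hin hit hne).2 (h tx hti)
  | succ j => exact h j (by omega)

lemma tr_above (hay : AdjR (fun j => (p j).2) n o.2 ty) {i : ℕ} (hin : i < n)
    (hti : ty < i) (hit : i ≠ ty) (h : AboveAll p i) :
    AboveAll (withOrigin o p) (i+1) := by
  intro j hj
  cases j with
  | zero => exact (hay.2 i hin hit).2 (h ty hti)
  | succ j => exact h j (by omega)

lemma tr_below (hay : AdjR (fun j => (p j).2) n o.2 ty) {i : ℕ} (hin : i < n)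
    (hti : ty < i) (hit : i ≠ ty) (hne : (p i).2 ≠ (p ty).2) (h : BelowAll p i) :
    BelowAll (withOrigin o p) (i+1) := by
  intro j hj
  cases j with
  | zero => exact (adjr_gt hay hin hit hne).2 (h ty hti)
  | succ j => exact h j (by omega)

lemma tr_vsep (hax : AdjR (fun j => (p j).1) n o.1 tx) {k : ℕ} (hkn : k+2 < n)
    (ht : tx < k+1) (hit : k+2 ≠ tx) (hne : (p (k+2)).1 ≠ (p tx).1)
    (h : VLineSep p (k+2)) : VLineSep (withOrigin o p) (k+3) := by
  rcases h with ⟨h1, hj⟩ | ⟨h1, hj⟩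
  · refine Or.inl ⟨h1, ?_⟩
    intro j hjlt
    cases j with
    | zero => exact (adjr_gt hax hkn hit hne).2 (hj tx ht)
    | succ j => exact hj j (by omega)
  · refine Or.inr ⟨h1, ?_⟩
    intro j hjlt
    cases j with
    | zero => exact (hax.2 (k+2) hkn hit).2 (hj tx ht)
    | succ j => exact hj j (by omega)

lemma tr_hsep (hay : AdjR (fun j => (p j).2) n o.2 ty) {k : ℕ} (hkn : k+2 < n)
    (ht : ty < k+1) (hit : k+2 ≠ ty) (hne : (p (k+2)).2 ≠ (p ty).2)
    (h : HLineSep p (k+2)) : HLineSep (withOrigin o p) (k+3) := by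
  rcases h with ⟨h1, hj⟩ | ⟨h1, hj⟩
  · refine Or.inl ⟨h1, ?_⟩
    intro j hjlt
    cases j with
    | zero => exact (adjr_gt hay hkn hit hne).2 (hj ty ht)
    | succ j => exact hj j (by omega)
  · refine Or.inr ⟨h1, ?_⟩
    intro j hjlt
    cases j with
    | zero => exact (hay.2 (k+2) hkn hit).2 (hj ty ht)
    | succ j => exact hj j (by omega)

lemma tr_indep (hax : AdjR (fun j => (p j).1) n o.1 tx)
    (hay : AdjR (fun j => (p j).2) n o.2 ty) {i : ℕ} (hin : i < n)
    (htxi : tx < i) (htyi : ty < i) (hitx : i ≠ tx) (hity : i ≠ ty)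
    (hnex : (p i).1 ≠ (p tx).1) (hney : (p i).2 ≠ (p ty).2)
    (h : IndepCond p i) : IndepCond (withOrigin o p) (i+1) := by
  constructor
  · rintro ⟨⟨j1, hj1, h1⟩, ⟨j2, hj2, h2⟩⟩
    refine h.1 ⟨?_, ?_⟩
    · cases j1 with
      | zero => exact ⟨tx, htxi, (hax.2 i hin hitx).1 h1⟩
      | succ j => exact ⟨j, by omega, h1⟩
    · cases j2 with
      | zero => exact ⟨tx, htxi, (adjr_gt hax hin hitx hnex).1 h2⟩
      | succ j => exact ⟨j, by omega, h2⟩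
  · rintro ⟨⟨j1, hj1, h1⟩, ⟨j2, hj2, h2⟩⟩
    refine h.2 ⟨?_, ?_⟩
    · cases j1 with
      | zero => exact ⟨ty, htyi, (hay.2 i hin hity).1 h1⟩
      | succ j => exact ⟨j, by omega, h1⟩
    · cases j2 with
      | zero => exact ⟨ty, htyi, (adjr_gt hay hin hity hney).1 h2⟩
      | succ j => exact ⟨j, by omega, h2⟩

lemma transfer_ge3 (hps : IsPinSeq p n)
    (hax : AdjR (fun j => (p j).1) n o.1 tx) (hay : AdjR (fun j => (p j).2) n o.2 ty)
    (htx : tx < 2) (hty : ty < 2) (k : ℕ) (hkn : k+3 < n) {l : Letter}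
    (h : LetterIs p (k+3) l) : LetterIs (withOrigin o p) (k+4) l := by
  have hnex : (p (k+3)).1 ≠ (p tx).1 := dist_x hps hkn (by omega) (by omega)
  have hney : (p (k+3)).2 ≠ (p ty).2 := dist_y hps hkn (by omega) (by omega)
  cases l with
  | n1 => exact ⟨tr_indep hax hay hkn (by omega) (by omega) (by omega) (by omega) hnex hney h.1,
      tr_right hax hkn (by omega) (by omega) h.2.1, tr_above hay hkn (by omega) (by omega) h.2.2⟩
  | n2 => exact ⟨tr_indep hax hay hkn (by omega) (by omega) (by omega) (by omega) hnex hney h.1,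
      tr_left hax hkn (by omega) (by omega) hnex h.2.1,
      tr_above hay hkn (by omega) (by omega) h.2.2⟩
  | n3 => exact ⟨tr_indep hax hay hkn (by omega) (by omega) (by omega) (by omega) hnex hney h.1,
      tr_left hax hkn (by omega) (by omega) hnex h.2.1,
      tr_below hay hkn (by omega) (by omega) hney h.2.2⟩
  | n4 => exact ⟨tr_indep hax hay hkn (by omega) (by omega) (by omega) (by omega) hnex hney h.1,
      tr_right hax hkn (by omega) (by omega) h.2.1,
      tr_below hay hkn (by omega) (by omega) hney h.2.2⟩
  | U => exact ⟨by omega, h.2.1.elim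
      (fun hv => Or.inl (tr_vsep hax (k := k+1) hkn (by omega) (by omega) hnex hv))
      (fun hh => Or.inr (tr_hsep hay (k := k+1) hkn (by omega) (by omega) hney hh)),
      tr_above hay hkn (by omega) (by omega) h.2.2⟩
  | D => exact ⟨by omega, h.2.1.elim
      (fun hv => Or.inl (tr_vsep hax (k := k+1) hkn (by omega) (by omega) hnex hv))
      (fun hh => Or.inr (tr_hsep hay (k := k+1) hkn (by omega) (by omega) hney hh)),
      tr_below hay hkn (by omega) (by omega) hney h.2.2⟩
  | L => exact ⟨by omega, h.2.1.elim
      (fun hv => Or.inl (tr_vsep hax (k := k+1) hkn (by omega) (by omega) hnex hv))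
      (fun hh => Or.inr (tr_hsep hay (k := k+1) hkn (by omega) (by omega) hney hh)),
      tr_left hax hkn (by omega) (by omega) hnex h.2.2⟩
  | R => exact ⟨by omega, h.2.1.elim
      (fun hv => Or.inl (tr_vsep hax (k := k+1) hkn (by omega) (by omega) hnex hv))
      (fun hh => Or.inr (tr_hsep hay (k := k+1) hkn (by omega) (by omega) hney hh)),
      tr_right hax hkn (by omega) (by omega) h.2.2⟩

lemma sep2_not_indep {r : ℕ → Point} (hs : SepCond r 2) (hind : IndepCond r 2) : False := by
  rcases hs with hV | hH
  · rcases hV with ⟨h1, hj⟩ | ⟨h1, hj⟩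
    · exact hind.1 ⟨⟨1, by omega, h1⟩, ⟨0, by omega, hj 0 (by omega)⟩⟩
    · exact hind.1 ⟨⟨0, by omega, hj 0 (by omega)⟩, ⟨1, by omega, h1⟩⟩
  · rcases hH with ⟨h1, hj⟩ | ⟨h1, hj⟩
    · exact hind.2 ⟨⟨1, by omega, h1⟩, ⟨0, by omega, hj 0 (by omega)⟩⟩
    · exact hind.2 ⟨⟨0, by omega, hj 0 (by omega)⟩, ⟨1, by omega, h1⟩⟩

lemma transfer_at2_num (hps : IsPinSeq p n)
    (hax : AdjR (fun j => (p j).1) n o.1 tx) (hay : AdjR (fun j => (p j).2) n o.2 ty)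
    (htx : tx < 2) (hty : ty < 2) (h2n : 2 < n) (hind : IndepCond p 2) {l : Letter}
    (h : LetterIs p 2 l) : LetterIs (withOrigin o p) 3 l := by
  have hnex : (p 2).1 ≠ (p tx).1 := dist_x hps h2n (by omega) (by omega)
  have hney : (p 2).2 ≠ (p ty).2 := dist_y hps h2n (by omega) (by omega)
  cases l with
  | n1 => exact ⟨tr_indep hax hay h2n htx hty (by omega) (by omega) hnex hney h.1,
      tr_right hax h2n htx (by omega) h.2.1, tr_above hay h2n hty (by omega) h.2.2⟩
  | n2 => exact ⟨tr_indep hax hay h2n htx hty (by omega) (by omega) hnex hney h.1,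
      tr_left hax h2n htx (by omega) hnex h.2.1, tr_above hay h2n hty (by omega) h.2.2⟩
  | n3 => exact ⟨tr_indep hax hay h2n htx hty (by omega) (by omega) hnex hney h.1,
      tr_left hax h2n htx (by omega) hnex h.2.1, tr_below hay h2n hty (by omega) hney h.2.2⟩
  | n4 => exact ⟨tr_indep hax hay h2n htx hty (by omega) (by omega) hnex hney h.1,
      tr_right hax h2n htx (by omega) h.2.1, tr_below hay h2n hty (by omega) hney h.2.2⟩
  | U => exact absurd h.2.1 (fun hs => sep2_not_indep hs hind)
  | D => exact absurd h.2.1 (fun hs => sep2_not_indep hs hind)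
  | L => exact absurd h.2.1 (fun hs => sep2_not_indep hs hind)
  | R => exact absurd h.2.1 (fun hs => sep2_not_indep hs hind)

lemma transfer_at2_V (hps : IsPinSeq p n)
    (hax : AdjR (fun j => (p j).1) n o.1 tx) (hay : AdjR (fun j => (p j).2) n o.2 ty)
    (htx : tx = 0) (hty : ty < 2) (h2n : 2 < n) (hV : VLineSep p 2) {l : Letter}
    (h : LetterIs p 2 l) : LetterIs (withOrigin o p) 3 l := by
  have hnex : (p 2).1 ≠ (p tx).1 := dist_x hps h2n (by omega) (by omega)
  have hney : (p 2).2 ≠ (p ty).2 := dist_y hps h2n (by omega) (by omega)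
  cases l with
  | n1 => exact absurd (Or.inl hV : SepCond p 2) (fun hs => sep2_not_indep hs h.1)
  | n2 => exact absurd (Or.inl hV : SepCond p 2) (fun hs => sep2_not_indep hs h.1)
  | n3 => exact absurd (Or.inl hV : SepCond p 2) (fun hs => sep2_not_indep hs h.1)
  | n4 => exact absurd (Or.inl hV : SepCond p 2) (fun hs => sep2_not_indep hs h.1)
  | U => exact ⟨by omega,
      Or.inl (tr_vsep hax (k := 0) h2n (by omega) (by omega) hnex hV),
      tr_above hay h2n hty (by omega) h.2.2⟩
  | D => exact ⟨by omega,
      Or.inl (tr_vsep hax (k := 0) h2n (by omega) (by omega) hnex hV),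
      tr_below hay h2n hty (by omega) hney h.2.2⟩
  | L => exact absurd hV (fun hv => not_vsep_left (by omega) hv h.2.2)
  | R => exact absurd hV (fun hv => not_vsep_right (by omega) hv h.2.2)

end Transfer

section BuildWord

variable {n : ℕ} {p : ℕ → Point} {o : Point} {tx ty : ℕ}

instance : Nonempty Letter := ⟨Letter.U⟩

noncomputable def pletter (p : ℕ → Point) (i : ℕ) : Letter :=
  Classical.epsilon (LetterIs p i)

lemma pletter_spec (hps : IsPinSeq p n) {i : ℕ} (h2 : 2 ≤ i) (hin : i < n) :
    LetterIs p i (pletter p i) := by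
  have h := hps.2 i (by omega) hin
  have hd : ∀ j < i, (p j).1 ≠ (p i).1 ∧ (p j).2 ≠ (p i).2 := fun j hj =>
    hps.1 j (by omega) i hin (by omega)
  exact Classical.epsilon_spec (exists_letter h2 h.1 h.2 hd)

lemma getD_map_range {α : Type*} (f : ℕ → α) {i m : ℕ} (hi : i < m) (d : α) :
    ((List.range m).map f).getD i d = f i := by
  rw [List.getD_eq_getElem?_getD, List.getElem?_map, List.getElem?_range hi]
  rfl

lemma build_mem (hn : 2 ≤ n) (hps : IsPinSeq p n)
    (hax : AdjR (fun j => (p j).1) n o.1 tx) (hay : AdjR (fun j => (p j).2) n o.2 ty)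
    (ℓs : ℕ → Letter)
    (hall : ∀ i < n, LetterIs (withOrigin o p) (i+1) (ℓs i)) :
    (List.range n).map ℓs ∈ WordsOfRepr n p := by
  refine ⟨o, ⟨?_, ?_⟩, ?_, ?_⟩
  · intro i hi j hj hij
    cases i with
    | zero =>
      cases j with
      | zero => omega
      | succ j => exact ⟨hax.1 j (by omega), hay.1 j (by omega)⟩
    | succ i =>
      cases j with
      | zero => exact ⟨(hax.1 i (by omega)).symm, (hay.1 i (by omega)).symm⟩
      | succ j => exact hps.1 i (by omega) j (by omega) (by omega)
  · intro i h1 hi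
    obtain ⟨j, rfl⟩ : ∃ j, i = j + 1 := ⟨i - 1, by omega⟩
    exact letter_ok (hall j (by omega))
  · simp
  · intro i hi
    rw [getD_map_range _ hi]
    exact hall i hi

lemma indep_one : IndepCond (withOrigin o p) 1 := by
  constructor <;> rintro ⟨⟨j1, hj1, h1⟩, ⟨j2, hj2, h2⟩⟩ <;>
    (interval_cases j1 <;> interval_cases j2 <;> linarith)

lemma letter1_n1 (hx : o.1 < (p 0).1) (hy : o.2 < (p 0).2) :
    LetterIs (withOrigin o p) 1 .n1 :=
  ⟨indep_one, fun j hj => by interval_cases j; exact hx,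
    fun j hj => by interval_cases j; exact hy⟩

lemma letter1_n2 (hx : (p 0).1 < o.1) (hy : o.2 < (p 0).2) :
    LetterIs (withOrigin o p) 1 .n2 :=
  ⟨indep_one, fun j hj => by interval_cases j; exact hx,
    fun j hj => by interval_cases j; exact hy⟩

lemma letter1_n3 (hx : (p 0).1 < o.1) (hy : (p 0).2 < o.2) :
    LetterIs (withOrigin o p) 1 .n3 :=
  ⟨indep_one, fun j hj => by interval_cases j; exact hx,
    fun j hj => by interval_cases j; exact hy⟩

lemma letter1_n4 (hx : o.1 < (p 0).1) (hy : (p 0).2 < o.2) :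
    LetterIs (withOrigin o p) 1 .n4 :=
  ⟨indep_one, fun j hj => by interval_cases j; exact hx,
    fun j hj => by interval_cases j; exact hy⟩

lemma letter2_n1 (ha : (p 0).1 < (p 1).1) (hb : (p 0).2 < (p 1).2)
    (hx0 : o.1 < (p 1).1) (hy0 : o.2 < (p 1).2) :
    LetterIs (withOrigin o p) 2 .n1 := by
  refine ⟨⟨?_, ?_⟩, ?_, ?_⟩
  · rintro ⟨⟨j1, hj1, h1⟩, ⟨j2, hj2, h2⟩⟩
    interval_cases j2 <;> simp only [wo_zero, wo_succ] at h2 <;> linarith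
  · rintro ⟨⟨j1, hj1, h1⟩, ⟨j2, hj2, h2⟩⟩
    interval_cases j2 <;> simp only [wo_zero, wo_succ] at h2 <;> linarith
  · intro j hj; interval_cases j
    · exact hx0
    · exact ha
  · intro j hj; interval_cases j
    · exact hy0
    · exact hb

lemma letter2_U (ha : (p 0).1 < (p 1).1) (hb : (p 0).2 < (p 1).2)
    (hxF : (p 1).1 < o.1) (hy1 : o.2 < (p 1).2) :
    LetterIs (withOrigin o p) 2 .U := by
  refine ⟨by omega, Or.inl (Or.inl ⟨ha, ?_⟩), ?_⟩
  · intro j hj; interval_cases j; exact hxF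
  · intro j hj; interval_cases j
    · exact hy1
    · exact hb

lemma letter2_R (ha : (p 0).1 < (p 1).1) (hb : (p 0).2 < (p 1).2)
    (hx1 : o.1 < (p 1).1) (hyF : (p 1).2 < o.2) :
    LetterIs (withOrigin o p) 2 .R := by
  refine ⟨by omega, Or.inr (Or.inl ⟨hb, ?_⟩), ?_⟩
  · intro j hj; interval_cases j; exact hyF
  · intro j hj; interval_cases j
    · exact hx1
    · exact ha

lemma hall_tail (hps : IsPinSeq p n)
    (hax : AdjR (fun j => (p j).1) n o.1 tx) (hay : AdjR (fun j => (p j).2) n o.2 ty)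
    (htx : tx < 2) (hty : ty < 2)
    (hcase : (2 < n → IndepCond p 2) ∨ (tx = 0 ∧ VLineSep p 2)) :
    ∀ k, k + 2 < n → LetterIs (withOrigin o p) (k+3) (pletter p (k+2)) := by
  intro k hk
  have hl := pletter_spec hps (by omega) hk
  cases k with
  | zero =>
    rcases hcase with hind | ⟨h0, hV⟩
    · exact transfer_at2_num hps hax hay htx hty hk (hind hk) hl
    · exact transfer_at2_V hps hax hay h0 hty hk hV hl
  | succ k => exact transfer_ge3 hps hax hay htx hty k hk hl

lemma region_mem (hn : 2 ≤ n) (hps : IsPinSeq p n)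
    (hax : AdjR (fun j => (p j).1) n o.1 tx) (hay : AdjR (fun j => (p j).2) n o.2 ty)
    (c1 c2 : Letter) (h1 : LetterIs (withOrigin o p) 1 c1)
    (h2 : LetterIs (withOrigin o p) 2 c2)
    (h3 : ∀ k, k + 2 < n → LetterIs (withOrigin o p) (k+3) (pletter p (k+2))) :
    ∃ w ∈ WordsOfRepr n p, w.getD 0 Letter.U = c1 ∧ w.getD 1 Letter.U = c2 := by
  set ℓs : ℕ → Letter := fun i => if i = 0 then c1 else if i = 1 then c2 else pletter p i
    with hℓs
  have hall : ∀ i < n, LetterIs (withOrigin o p) (i+1) (ℓs i) := by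
    intro i hi
    match i with
    | 0 => simpa [hℓs] using h1
    | 1 => simpa [hℓs] using h2
    | (k+2) => simpa [hℓs] using h3 k hi
  refine ⟨(List.range n).map ℓs, build_mem hn hps hax hay ℓs hall, ?_, ?_⟩
  · rw [getD_map_range _ (by omega)]; simp [hℓs]
  · rw [getD_map_range _ (by omega)]; simp [hℓs]

end BuildWord

section Realize

variable {n : ℕ} {p : ℕ → Point}

/-- Convenient form of the case hypothesis for quadrant-1 configurations. -/
def QCase (p : ℕ → Point) (n : ℕ) : Prop :=
  (2 < n → IndepCond p 2) ∨ VLineSep p 2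

lemma realize_pair (hn : 2 ≤ n) (hps : IsPinSeq p n)
    (ha : (p 0).1 < (p 1).1) (hb : (p 0).2 < (p 1).2)
    (hcase : QCase p n) (c : Letter × Letter)
    (hc : c ∈ ({(Letter.n1, Letter.n1), (Letter.n2, Letter.n1), (Letter.n3, Letter.n1),
      (Letter.n4, Letter.n1), (Letter.n3, Letter.R), (Letter.n4, Letter.R)} :
        Finset (Letter × Letter))) :
    ∃ w ∈ WordsOfRepr n p, w.getD 0 Letter.U = c.1 ∧ w.getD 1 Letter.U = c.2 := by
  have h0n : 0 < n := by omega
  have h1n : 1 < n := by omega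
  have hdx0 : ∀ j < n, j ≠ 0 → (p j).1 ≠ (p 0).1 := fun j hj hjt => dist_x hps hj h0n hjt
  have hdy0 : ∀ j < n, j ≠ 0 → (p j).2 ≠ (p 0).2 := fun j hj hjt => dist_y hps hj h0n hjt
  have hdy1 : ∀ j < n, j ≠ 1 → (p j).2 ≠ (p 1).2 := fun j hj hjt => dist_y hps hj h1n hjt
  have hcase' : ∀ tx : ℕ, tx = 0 → ((2 < n → IndepCond p 2) ∨ (tx = 0 ∧ VLineSep p 2)) :=
    fun tx htx => hcase.imp id (fun hV => ⟨htx, hV⟩)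
  fin_cases hc
  · -- (n1, n1) : region a
    obtain ⟨xo, hx1, hx2, hx3⟩ := exists_adj_lt (fun j => (p j).1) n 0 hdx0
    obtain ⟨yo, hy1, hy2, hy3⟩ := exists_adj_lt (fun j => (p j).2) n 0 hdy0
    have hax : AdjR (fun j => (p j).1) n ((xo, yo) : Point).1 0 := ⟨hx2, hx3⟩
    have hay : AdjR (fun j => (p j).2) n ((xo, yo) : Point).2 0 := ⟨hy2, hy3⟩
    exact region_mem (o := (xo, yo)) hn hps hax hay _ _
      (letter1_n1 hx1 hy1) (letter2_n1 ha hb (lt_trans hx1 ha) (lt_trans hy1 hb))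
      (hall_tail hps hax hay (by omega) (by omega) (hcase' 0 rfl))
  · -- (n2, n1) : region b
    obtain ⟨xo, hx1, hx2, hx3⟩ := exists_adj_gt (fun j => (p j).1) n 0 hdx0
    obtain ⟨yo, hy1, hy2, hy3⟩ := exists_adj_lt (fun j => (p j).2) n 0 hdy0
    have hax : AdjR (fun j => (p j).1) n ((xo, yo) : Point).1 0 := ⟨hx2, hx3⟩
    have hay : AdjR (fun j => (p j).2) n ((xo, yo) : Point).2 0 := ⟨hy2, hy3⟩
    exact region_mem (o := (xo, yo)) hn hps hax hay _ _
      (letter1_n2 hx1 hy1)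
      (letter2_n1 ha hb ((hx3 1 h1n (by omega)).2 ha) (lt_trans hy1 hb))
      (hall_tail hps hax hay (by omega) (by omega) (hcase' 0 rfl))
  · -- (n3, n1) : region c
    obtain ⟨xo, hx1, hx2, hx3⟩ := exists_adj_gt (fun j => (p j).1) n 0 hdx0
    obtain ⟨yo, hy1, hy2, hy3⟩ := exists_adj_gt (fun j => (p j).2) n 0 hdy0
    have hax : AdjR (fun j => (p j).1) n ((xo, yo) : Point).1 0 := ⟨hx2, hx3⟩
    have hay : AdjR (fun j => (p j).2) n ((xo, yo) : Point).2 0 := ⟨hy2, hy3⟩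
    exact region_mem (o := (xo, yo)) hn hps hax hay _ _
      (letter1_n3 hx1 hy1)
      (letter2_n1 ha hb ((hx3 1 h1n (by omega)).2 ha) ((hy3 1 h1n (by omega)).2 hb))
      (hall_tail hps hax hay (by omega) (by omega) (hcase' 0 rfl))
  · -- (n4, n1) : region d
    obtain ⟨xo, hx1, hx2, hx3⟩ := exists_adj_lt (fun j => (p j).1) n 0 hdx0
    obtain ⟨yo, hy1, hy2, hy3⟩ := exists_adj_gt (fun j => (p j).2) n 0 hdy0
    have hax : AdjR (fun j => (p j).1) n ((xo, yo) : Point).1 0 := ⟨hx2, hx3⟩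
    have hay : AdjR (fun j => (p j).2) n ((xo, yo) : Point).2 0 := ⟨hy2, hy3⟩
    exact region_mem (o := (xo, yo)) hn hps hax hay _ _
      (letter1_n4 hx1 hy1)
      (letter2_n1 ha hb (lt_trans hx1 ha) ((hy3 1 h1n (by omega)).2 hb))
      (hall_tail hps hax hay (by omega) (by omega) (hcase' 0 rfl))
  · -- (n3, R) : region g
    obtain ⟨xo, hx1, hx2, hx3⟩ := exists_adj_gt (fun j => (p j).1) n 0 hdx0
    obtain ⟨yo, hy1, hy2, hy3⟩ := exists_adj_gt (fun j => (p j).2) n 1 hdy1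
    have hax : AdjR (fun j => (p j).1) n ((xo, yo) : Point).1 0 := ⟨hx2, hx3⟩
    have hay : AdjR (fun j => (p j).2) n ((xo, yo) : Point).2 1 := ⟨hy2, hy3⟩
    exact region_mem (o := (xo, yo)) hn hps hax hay _ _
      (letter1_n3 hx1 (lt_trans hb hy1))
      (letter2_R ha hb ((hx3 1 h1n (by omega)).2 ha) hy1)
      (hall_tail hps hax hay (by omega) (by omega) (hcase' 0 rfl))
  · -- (n4, R) : region h
    obtain ⟨xo, hx1, hx2, hx3⟩ := exists_adj_lt (fun j => (p j).1) n 0 hdx0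
    obtain ⟨yo, hy1, hy2, hy3⟩ := exists_adj_gt (fun j => (p j).2) n 1 hdy1
    have hax : AdjR (fun j => (p j).1) n ((xo, yo) : Point).1 0 := ⟨hx2, hx3⟩
    have hay : AdjR (fun j => (p j).2) n ((xo, yo) : Point).2 1 := ⟨hy2, hy3⟩
    exact region_mem (o := (xo, yo)) hn hps hax hay _ _
      (letter1_n4 hx1 (lt_trans hb hy1))
      (letter2_R ha hb (lt_trans hx1 ha) hy1)
      (hall_tail hps hax hay (by omega) (by omega) (hcase' 0 rfl))

lemma realize_pair_far (hn : 2 ≤ n) (hps : IsPinSeq p n)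
    (ha : (p 0).1 < (p 1).1) (hb : (p 0).2 < (p 1).2)
    (hind : 2 < n → IndepCond p 2) (c : Letter × Letter)
    (hc : c ∈ ({(Letter.n2, Letter.U), (Letter.n3, Letter.U)} : Finset (Letter × Letter))) :
    ∃ w ∈ WordsOfRepr n p, w.getD 0 Letter.U = c.1 ∧ w.getD 1 Letter.U = c.2 := by
  have h0n : 0 < n := by omega
  have h1n : 1 < n := by omega
  have hdx1 : ∀ j < n, j ≠ 1 → (p j).1 ≠ (p 1).1 := fun j hj hjt => dist_x hps hj h1n hjt
  have hdy0 : ∀ j < n, j ≠ 0 → (p j).2 ≠ (p 0).2 := fun j hj hjt => dist_y hps hj h0n hjt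
  fin_cases hc
  · -- (n2, U) : region e
    obtain ⟨xo, hx1, hx2, hx3⟩ := exists_adj_gt (fun j => (p j).1) n 1 hdx1
    obtain ⟨yo, hy1, hy2, hy3⟩ := exists_adj_lt (fun j => (p j).2) n 0 hdy0
    have hax : AdjR (fun j => (p j).1) n ((xo, yo) : Point).1 1 := ⟨hx2, hx3⟩
    have hay : AdjR (fun j => (p j).2) n ((xo, yo) : Point).2 0 := ⟨hy2, hy3⟩
    exact region_mem (o := (xo, yo)) hn hps hax hay _ _
      (letter1_n2 (lt_trans ha hx1) hy1)
      (letter2_U ha hb hx1 (lt_trans hy1 hb))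
      (hall_tail hps hax hay (by omega) (by omega) (Or.inl hind))
  · -- (n3, U) : region f
    obtain ⟨xo, hx1, hx2, hx3⟩ := exists_adj_gt (fun j => (p j).1) n 1 hdx1
    obtain ⟨yo, hy1, hy2, hy3⟩ := exists_adj_gt (fun j => (p j).2) n 0 hdy0
    have hax : AdjR (fun j => (p j).1) n ((xo, yo) : Point).1 1 := ⟨hx2, hx3⟩
    have hay : AdjR (fun j => (p j).2) n ((xo, yo) : Point).2 0 := ⟨hy2, hy3⟩
    exact region_mem (o := (xo, yo)) hn hps hax hay _ _
      (letter1_n3 (lt_trans ha hx1) hy1)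
      (letter2_U ha hb hx1 ((hy3 1 h1n (by omega)).2 hb))
      (hall_tail hps hax hay (by omega) (by omega) (Or.inl hind))

end Realize

section Upper

variable {n : ℕ} {p : ℕ → Point} {o : Point}

def S8 : Finset (Letter × Letter) :=
  {(.n1, .n1), (.n2, .n1), (.n3, .n1), (.n4, .n1), (.n2, .U), (.n3, .U), (.n3, .R), (.n4, .R)}

def S6 : Finset (Letter × Letter) :=
  {(.n1, .n1), (.n2, .n1), (.n3, .n1), (.n4, .n1), (.n3, .R), (.n4, .R)}

lemma c1_cases {c : Letter} (h0 : LetterIs (withOrigin o p) 1 c) :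
    (c = .n1 ∧ o.1 < (p 0).1 ∧ o.2 < (p 0).2) ∨
    (c = .n2 ∧ (p 0).1 < o.1 ∧ o.2 < (p 0).2) ∨
    (c = .n3 ∧ (p 0).1 < o.1 ∧ (p 0).2 < o.2) ∨
    (c = .n4 ∧ o.1 < (p 0).1 ∧ (p 0).2 < o.2) := by
  cases c with
  | n1 => exact Or.inl ⟨rfl, h0.2.1 0 (by omega), h0.2.2 0 (by omega)⟩
  | n2 => exact Or.inr (Or.inl ⟨rfl, h0.2.1 0 (by omega), h0.2.2 0 (by omega)⟩)
  | n3 => exact Or.inr (Or.inr (Or.inl ⟨rfl, h0.2.1 0 (by omega), h0.2.2 0 (by omega)⟩))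
  | n4 => exact Or.inr (Or.inr (Or.inr ⟨rfl, h0.2.1 0 (by omega), h0.2.2 0 (by omega)⟩))
  | U => exact absurd h0.1 (by omega)
  | D => exact absurd h0.1 (by omega)
  | L => exact absurd h0.1 (by omega)
  | R => exact absurd h0.1 (by omega)

lemma c2_cases {c : Letter} (ha : (p 0).1 < (p 1).1) (hb : (p 0).2 < (p 1).2)
    (h1 : LetterIs (withOrigin o p) 2 c) :
    (c = .n1 ∧ o.1 < (p 1).1 ∧ o.2 < (p 1).2) ∨
    (c = .U ∧ (p 1).1 < o.1 ∧ o.2 < (p 1).2) ∨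
    (c = .R ∧ o.1 < (p 1).1 ∧ (p 1).2 < o.2) := by
  cases c with
  | n1 => exact Or.inl ⟨rfl, h1.2.1 0 (by omega), h1.2.2 0 (by omega)⟩
  | n2 => exfalso; have h : (p 1).1 < (p 0).1 := h1.2.1 1 (by omega); linarith
  | n3 => exfalso; have h : (p 1).1 < (p 0).1 := h1.2.1 1 (by omega); linarith
  | n4 => exfalso; have h : (p 1).2 < (p 0).2 := h1.2.2 1 (by omega); linarith
  | U =>
    have hyo : o.2 < (p 1).2 := h1.2.2 0 (by omega)
    refine Or.inr (Or.inl ⟨rfl, ?_, hyo⟩)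
    rcases h1.2.1 with (⟨hv1, hv2⟩ | ⟨hv1, hv2⟩) | (⟨hh1, hh2⟩ | ⟨hh1, hh2⟩)
    · exact hv2 0 (by omega)
    · exfalso; have h : (p 1).1 < (p 0).1 := hv1; linarith
    · exfalso; have h : (p 1).2 < o.2 := hh2 0 (by omega); linarith
    · exfalso; have h : (p 1).2 < (p 0).2 := hh1; linarith
  | D => exfalso; have h : (p 1).2 < (p 0).2 := h1.2.2 1 (by omega); linarith
  | L => exfalso; have h : (p 1).1 < (p 0).1 := h1.2.2 1 (by omega); linarith
  | R =>
    have hxo : o.1 < (p 1).1 := h1.2.2 0 (by omega)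
    refine Or.inr (Or.inr ⟨rfl, hxo, ?_⟩)
    rcases h1.2.1 with (⟨hv1, hv2⟩ | ⟨hv1, hv2⟩) | (⟨hh1, hh2⟩ | ⟨hh1, hh2⟩)
    · exfalso; have h : (p 1).1 < o.1 := hv2 0 (by omega); linarith
    · exfalso; have h : (p 1).1 < (p 0).1 := hv1; linarith
    · exact hh2 0 (by omega)
    · exfalso; have h : (p 1).2 < (p 0).2 := hh1; linarith

lemma upper_pairs (hn : 2 ≤ n) (ha : (p 0).1 < (p 1).1) (hb : (p 0).2 < (p 1).2)
    {w : List Letter} (hw : w ∈ WordsOfRepr n p) :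
    (w.getD 0 Letter.U, w.getD 1 Letter.U) ∈ S8 := by
  obtain ⟨e, hpin, hlen, hlet⟩ := hw
  have h0 := hlet 0 (by omega)
  have h1 := hlet 1 (by omega)
  rcases c1_cases h0 with ⟨e1, hx, hy⟩ | ⟨e1, hx, hy⟩ | ⟨e1, hx, hy⟩ | ⟨e1, hx, hy⟩ <;>
    rcases c2_cases ha hb h1 with ⟨e2, hx2, hy2⟩ | ⟨e2, hx2, hy2⟩ | ⟨e2, hx2, hy2⟩ <;>
    rw [e1, e2] <;> first
      | decide
      | (exfalso; linarith)

lemma excl_U (h3n : 3 ≤ n) (hps : IsPinSeq p n)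
    (ha : (p 0).1 < (p 1).1) (hb : (p 0).2 < (p 1).2) (hV : VLineSep p 2)
    {w : List Letter} (hw : w ∈ WordsOfRepr n p) : w.getD 1 Letter.U ≠ Letter.U := by
  obtain ⟨e, hpin, hlen, hlet⟩ := hw
  intro hU
  have h1 := hlet 1 (by omega)
  rw [hU] at h1
  rcases c2_cases ha hb h1 with ⟨e2, _, _⟩ | ⟨_, hxF, hy1⟩ | ⟨e2, _, _⟩
  rotate_left
  rotate_left
  · exact absurd e2 (by decide)
  · exact absurd e2 (by decide)
  have hc2 : (p 2).1 < (p 1).1 ∧ (p 0).1 < (p 2).1 := by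
    rcases hV with ⟨h1', hj⟩ | ⟨h1', hj⟩
    · exfalso; have := hj 0 (by omega); linarith
    · exact ⟨h1', hj 0 (by omega)⟩
  have hout2 := (hps.2 2 (by omega) (by omega)).1
  have hy2 : (p 1).2 < (p 2).2 ∨ (p 2).2 < (p 0).2 := by
    rcases hout2 with h | h | h | h
    · exfalso; have := h 1 (by omega); linarith [hc2.1]
    · exfalso; have := h 0 (by omega); linarith [hc2.2]
    · exact Or.inl (h 1 (by omega))
    · exact Or.inr (h 0 (by omega))
  have h3 := (hpin.2 3 (by omega) (by omega)).2
  rcases h3 with ((⟨hv1, hv2⟩ | ⟨hv1, hv2⟩) | (⟨hh1, hh2⟩ | ⟨hh1, hh2⟩)) | ⟨hx, _⟩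
  · have h' : (p 1).1 < (p 2).1 := hv1; linarith [hc2.1]
  · have h' : e.1 < (p 2).1 := hv2 0 (by omega); linarith [hc2.1]
  · have h'1 : (p 1).2 < (p 2).2 := hh1
    have h'2 : (p 2).2 < (p 0).2 := hh2 1 (by omega)
    linarith
  · have h'1 : (p 2).2 < (p 1).2 := hh1
    have h'2 : (p 0).2 < (p 2).2 := hh2 1 (by omega)
    rcases hy2 with h | h <;> linarith
  · exact hx ⟨⟨1, by omega, hc2.2⟩, ⟨2, by omega, hc2.1⟩⟩

end Upper

section Count

variable {n : ℕ} {p : ℕ → Point}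

lemma getD_eq_getElem' (w : List Letter) {i : ℕ} (h : i < w.length) :
    w.getD i Letter.U = w[i] := by
  rw [List.getD_eq_getElem?_getD, List.getElem?_eq_getElem h]
  rfl

lemma words_injOn (hps : IsPinSeq p n) :
    Set.InjOn (fun w => (w.getD 0 Letter.U, w.getD 1 Letter.U)) (WordsOfRepr n p) := by
  intro w hw w' hw' he
  obtain ⟨e1, _, hlen, _⟩ := id hw
  obtain ⟨e2, _, hlen', _⟩ := id hw'
  have he1 : w.getD 0 Letter.U = w'.getD 0 Letter.U := congrArg Prod.fst he
  have he2 : w.getD 1 Letter.U = w'.getD 1 Letter.U := congrArg Prod.snd he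
  apply List.ext_getElem (by rw [hlen, hlen'])
  intro i h1 h2
  have hin : i < n := by rwa [hlen] at h1
  have hgd : w.getD i Letter.U = w'.getD i Letter.U := by
    match i with
    | 0 => exact he1
    | 1 => exact he2
    | (k+2) => exact words_agree hw hw' (k+2) (by omega) hin
  rw [← getD_eq_getElem' w h1, ← getD_eq_getElem' w' h2, hgd]

lemma S6_of_S8 : ∀ x ∈ S8, x.2 ≠ Letter.U → x ∈ S6 := by decide

lemma S8_split : ∀ x ∈ S8,
    x ∈ S6 ∨ x ∈ ({(Letter.n2, Letter.U), (Letter.n3, Letter.U)} : Finset (Letter × Letter)) := by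
  decide

lemma count6 (h3n : 3 ≤ n) (hps : IsPinSeq p n) (ha : (p 0).1 < (p 1).1)
    (hb : (p 0).2 < (p 1).2) (hV : VLineSep p 2) : (WordsOfRepr n p).ncard = 6 := by
  have hn : 2 ≤ n := by omega
  have hinj := words_injOn hps
  have himg : (fun w => (w.getD 0 Letter.U, w.getD 1 Letter.U)) '' WordsOfRepr n p = ↑S6 := by
    apply Set.Subset.antisymm
    · rintro _ ⟨w, hw, rfl⟩
      exact Finset.mem_coe.2 (S6_of_S8 _ (upper_pairs hn ha hb hw) (excl_U h3n hps ha hb hV hw))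
    · rintro ⟨s1, s2⟩ hs
      have hs' : (s1, s2) ∈ S6 := hs
      obtain ⟨w, hw, h0, h1⟩ := realize_pair hn hps ha hb (Or.inr hV) (s1, s2) hs'
      exact ⟨w, hw, by show (w.getD 0 Letter.U, w.getD 1 Letter.U) = (s1, s2); rw [h0, h1]⟩
  rw [← Set.ncard_image_of_injOn hinj, himg, Set.ncard_coe_finset]
  decide

lemma count8' (hn : 2 ≤ n) (hps : IsPinSeq p n) (ha : (p 0).1 < (p 1).1)
    (hb : (p 0).2 < (p 1).2) (hind : 2 < n → IndepCond p 2) :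
    (WordsOfRepr n p).ncard = 8 := by
  have hinj := words_injOn hps
  have himg : (fun w => (w.getD 0 Letter.U, w.getD 1 Letter.U)) '' WordsOfRepr n p = ↑S8 := by
    apply Set.Subset.antisymm
    · rintro _ ⟨w, hw, rfl⟩
      exact Finset.mem_coe.2 (upper_pairs hn ha hb hw)
    · rintro ⟨s1, s2⟩ hs
      have hs' : (s1, s2) ∈ S8 := hs
      rcases S8_split _ hs' with h | h
      · obtain ⟨w, hw, h0, h1⟩ := realize_pair hn hps ha hb (Or.inl hind) (s1, s2) h
        exact ⟨w, hw, by show (w.getD 0 Letter.U, w.getD 1 Letter.U) = (s1, s2); rw [h0, h1]⟩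
      · obtain ⟨w, hw, h0, h1⟩ := realize_pair_far hn hps ha hb hind (s1, s2) h
        exact ⟨w, hw, by show (w.getD 0 Letter.U, w.getD 1 Letter.U) = (s1, s2); rw [h0, h1]⟩
  rw [← Set.ncard_image_of_injOn hinj, himg, Set.ncard_coe_finset]
  decide

end Count

section Sym

def TX : Point → Point := fun z => (-z.1, z.2)
def TY : Point → Point := fun z => (z.1, -z.2)
def TS : Point → Point := fun z => (z.2, z.1)

def rX : Letter → Letter
  | .L => .R | .R => .L | .n1 => .n2 | .n2 => .n1 | .n3 => .n4 | .n4 => .n3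
  | .U => .U | .D => .D
def rY : Letter → Letter
  | .U => .D | .D => .U | .n1 => .n4 | .n4 => .n1 | .n2 => .n3 | .n3 => .n2
  | .L => .L | .R => .R
def rS : Letter → Letter
  | .U => .R | .R => .U | .D => .L | .L => .D | .n2 => .n4 | .n4 => .n2
  | .n1 => .n1 | .n3 => .n3

variable {r : ℕ → Point} {i m : ℕ}

lemma right_TX : RightAll (fun j => TX (r j)) i ↔ LeftAll r i := by
  unfold RightAll LeftAll
  constructor <;> intro h j hj <;> have := h j hj <;> simp only [TX] at this ⊢ <;> linarith

lemma left_TX : LeftAll (fun j => TX (r j)) i ↔ RightAll r i := by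
  unfold RightAll LeftAll
  constructor <;> intro h j hj <;> have := h j hj <;> simp only [TX] at this ⊢ <;> linarith

lemma above_TX : AboveAll (fun j => TX (r j)) i ↔ AboveAll r i := Iff.rfl
lemma below_TX : BelowAll (fun j => TX (r j)) i ↔ BelowAll r i := Iff.rfl

lemma vsep_TX : VLineSep (fun j => TX (r j)) i ↔ VLineSep r i := by
  unfold VLineSep
  constructor <;> rintro (⟨h1, h2⟩ | ⟨h1, h2⟩)
  · refine Or.inr ⟨?_, fun j hj => ?_⟩ <;> [skip; have := h2 j hj] <;>
      simp only [TX] at * <;> linarith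
  · refine Or.inl ⟨?_, fun j hj => ?_⟩ <;> [skip; have := h2 j hj] <;>
      simp only [TX] at * <;> linarith
  · refine Or.inr ⟨?_, fun j hj => ?_⟩ <;> [skip; have := h2 j hj] <;>
      simp only [TX] at * <;> linarith
  · refine Or.inl ⟨?_, fun j hj => ?_⟩ <;> [skip; have := h2 j hj] <;>
      simp only [TX] at * <;> linarith

lemma hsep_TX : HLineSep (fun j => TX (r j)) i ↔ HLineSep r i := Iff.rfl

lemma sep_TX : SepCond (fun j => TX (r j)) i ↔ SepCond r i := by
  unfold SepCond
  rw [vsep_TX, hsep_TX]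

lemma indep_TX : IndepCond (fun j => TX (r j)) i ↔ IndepCond r i := by
  unfold IndepCond
  simp only [TX, neg_lt_neg_iff]
  exact ⟨fun ⟨h1, h2⟩ => ⟨fun hc => h1 ⟨hc.2, hc.1⟩, h2⟩,
    fun ⟨h1, h2⟩ => ⟨fun hc => h1 ⟨hc.2, hc.1⟩, h2⟩⟩

lemma outside_TX : OutsideBox (fun j => TX (r j)) i ↔ OutsideBox r i := by
  unfold OutsideBox
  rw [right_TX, left_TX, above_TX, below_TX]
  tauto

lemma pinseq_TX : IsPinSeq (fun j => TX (r j)) m ↔ IsPinSeq r m := by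
  unfold IsPinSeq
  constructor <;> intro ⟨h1, h2⟩ <;> refine ⟨?_, ?_⟩
  · intro a ha b hb hab
    have := h1 a ha b hb hab
    simp only [TX, ne_eq, neg_inj] at this
    exact this
  · intro a h1a h2a
    have := h2 a h1a h2a
    rw [outside_TX, sep_TX, indep_TX] at this
    exact this
  · intro a ha b hb hab
    have := h1 a ha b hb hab
    simp only [TX, ne_eq, neg_inj]
    exact this
  · intro a h1a h2a
    have := h2 a h1a h2a
    rw [outside_TX, sep_TX, indep_TX]
    exact this

lemma letteris_TX (l : Letter) : LetterIs (fun j => TX (r j)) i (rX l) ↔ LetterIs r i l := by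
  cases l <;> simp only [rX, LetterIs, indep_TX, right_TX, left_TX, above_TX, below_TX, sep_TX]

lemma right_TY : RightAll (fun j => TY (r j)) i ↔ RightAll r i := Iff.rfl
lemma left_TY : LeftAll (fun j => TY (r j)) i ↔ LeftAll r i := Iff.rfl

lemma above_TY : AboveAll (fun j => TY (r j)) i ↔ BelowAll r i := by
  unfold AboveAll BelowAll
  constructor <;> intro h j hj <;> have := h j hj <;> simp only [TY] at this ⊢ <;> linarith

lemma below_TY : BelowAll (fun j => TY (r j)) i ↔ AboveAll r i := by
  unfold AboveAll BelowAll
  constructor <;> intro h j hj <;> have := h j hj <;> simp only [TY] at this ⊢ <;> linarith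

lemma vsep_TY : VLineSep (fun j => TY (r j)) i ↔ VLineSep r i := Iff.rfl

lemma hsep_TY : HLineSep (fun j => TY (r j)) i ↔ HLineSep r i := by
  unfold HLineSep
  constructor <;> rintro (⟨h1, h2⟩ | ⟨h1, h2⟩)
  · refine Or.inr ⟨?_, fun j hj => ?_⟩ <;> [skip; have := h2 j hj] <;>
      simp only [TY] at * <;> linarith
  · refine Or.inl ⟨?_, fun j hj => ?_⟩ <;> [skip; have := h2 j hj] <;>
      simp only [TY] at * <;> linarith
  · refine Or.inr ⟨?_, fun j hj => ?_⟩ <;> [skip; have := h2 j hj] <;>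
      simp only [TY] at * <;> linarith
  · refine Or.inl ⟨?_, fun j hj => ?_⟩ <;> [skip; have := h2 j hj] <;>
      simp only [TY] at * <;> linarith

lemma sep_TY : SepCond (fun j => TY (r j)) i ↔ SepCond r i := by
  unfold SepCond
  rw [vsep_TY, hsep_TY]

lemma indep_TY : IndepCond (fun j => TY (r j)) i ↔ IndepCond r i := by
  unfold IndepCond
  simp only [TY, neg_lt_neg_iff]
  exact ⟨fun ⟨h1, h2⟩ => ⟨h1, fun hc => h2 ⟨hc.2, hc.1⟩⟩,
    fun ⟨h1, h2⟩ => ⟨h1, fun hc => h2 ⟨hc.2, hc.1⟩⟩⟩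

lemma outside_TY : OutsideBox (fun j => TY (r j)) i ↔ OutsideBox r i := by
  unfold OutsideBox
  rw [right_TY, left_TY, above_TY, below_TY]
  tauto

lemma pinseq_TY : IsPinSeq (fun j => TY (r j)) m ↔ IsPinSeq r m := by
  unfold IsPinSeq
  constructor <;> intro ⟨h1, h2⟩ <;> refine ⟨?_, ?_⟩
  · intro a ha b hb hab
    have := h1 a ha b hb hab
    simp only [TY, ne_eq, neg_inj] at this
    exact this
  · intro a h1a h2a
    have := h2 a h1a h2a
    rw [outside_TY, sep_TY, indep_TY] at this
    exact this
  · intro a ha b hb hab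
    have := h1 a ha b hb hab
    simp only [TY, ne_eq, neg_inj]
    exact this
  · intro a h1a h2a
    have := h2 a h1a h2a
    rw [outside_TY, sep_TY, indep_TY]
    exact this

lemma letteris_TY (l : Letter) : LetterIs (fun j => TY (r j)) i (rY l) ↔ LetterIs r i l := by
  cases l <;>
    simp only [rY, LetterIs, indep_TY, right_TY, left_TY, above_TY, below_TY, sep_TY]

lemma right_TS : RightAll (fun j => TS (r j)) i ↔ AboveAll r i := Iff.rfl
lemma left_TS : LeftAll (fun j => TS (r j)) i ↔ BelowAll r i := Iff.rfl
lemma above_TS : AboveAll (fun j => TS (r j)) i ↔ RightAll r i := Iff.rfl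
lemma below_TS : BelowAll (fun j => TS (r j)) i ↔ LeftAll r i := Iff.rfl
lemma vsep_TS : VLineSep (fun j => TS (r j)) i ↔ HLineSep r i := Iff.rfl
lemma hsep_TS : HLineSep (fun j => TS (r j)) i ↔ VLineSep r i := Iff.rfl

lemma sep_TS : SepCond (fun j => TS (r j)) i ↔ SepCond r i := by
  unfold SepCond
  rw [vsep_TS, hsep_TS]
  exact or_comm

lemma indep_TS : IndepCond (fun j => TS (r j)) i ↔ IndepCond r i := by
  unfold IndepCond
  exact and_comm

lemma outside_TS : OutsideBox (fun j => TS (r j)) i ↔ OutsideBox r i := by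
  unfold OutsideBox
  rw [right_TS, left_TS, above_TS, below_TS]
  tauto

lemma pinseq_TS : IsPinSeq (fun j => TS (r j)) m ↔ IsPinSeq r m := by
  unfold IsPinSeq
  constructor <;> intro ⟨h1, h2⟩ <;> refine ⟨?_, ?_⟩
  · intro a ha b hb hab
    have := h1 a ha b hb hab
    exact ⟨this.2, this.1⟩
  · intro a h1a h2a
    have := h2 a h1a h2a
    rw [outside_TS, sep_TS, indep_TS] at this
    exact this
  · intro a ha b hb hab
    have := h1 a ha b hb hab
    exact ⟨this.2, this.1⟩
  · intro a h1a h2a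
    have := h2 a h1a h2a
    rw [outside_TS, sep_TS, indep_TS]
    exact this

lemma letteris_TS (l : Letter) : LetterIs (fun j => TS (r j)) i (rS l) ↔ LetterIs r i l := by
  cases l <;>
    simp only [rS, LetterIs, indep_TS, right_TS, left_TS, above_TS, below_TS, sep_TS] <;>
    tauto

def CountGoal (n : ℕ) (p : ℕ → Point) : Prop :=
  ((3 ≤ n ∧ SepCond p 2) → (WordsOfRepr n p).ncard = 6) ∧
  (¬(3 ≤ n ∧ SepCond p 2) → (WordsOfRepr n p).ncard = 8)

lemma getD_map' (w : List Letter) (ρ : Letter → Letter) {i : ℕ} (h : i < w.length) :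
    (w.map ρ).getD i Letter.U = ρ (w.getD i Letter.U) := by
  rw [getD_eq_getElem' _ (by simpa using h), getD_eq_getElem' _ h, List.getElem_map]

lemma wordof_T (T : Point → Point) (ρ : Letter → Letter)
    (hletter : ∀ (r : ℕ → Point) (i : ℕ) (l : Letter),
      LetterIs (fun j => T (r j)) i (ρ l) ↔ LetterIs r i l)
    {q : ℕ → Point} {m : ℕ} {w : List Letter} :
    WordOf (fun i => T (q i)) m (w.map ρ) ↔ WordOf q m w := by
  unfold WordOf
  constructor <;> intro ⟨h1, h2⟩
  · have hlen : w.length = m := by simpa using h1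
    refine ⟨hlen, fun i hi => ?_⟩
    have hh := h2 i hi
    rw [getD_map' w ρ (by omega)] at hh
    exact (hletter _ _ _).1 hh
  · refine ⟨by simpa using h1, fun i hi => ?_⟩
    rw [getD_map' w ρ (by omega)]
    exact (hletter _ _ _).2 (h2 i hi)

lemma wo_T (T : Point → Point) (o : Point) (p : ℕ → Point) :
    withOrigin (T o) (fun j => T (p j)) = fun i => T (withOrigin o p i) := by
  funext i; cases i <;> rfl

lemma sub_T (T : Point → Point) (ρ : Letter → Letter)
    (hletter : ∀ (r : ℕ → Point) (i : ℕ) (l : Letter),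
      LetterIs (fun j => T (r j)) i (ρ l) ↔ LetterIs r i l)
    (hpin : ∀ (r : ℕ → Point) (m : ℕ), IsPinSeq (fun j => T (r j)) m ↔ IsPinSeq r m)
    {m : ℕ} {p : ℕ → Point} :
    List.map ρ '' WordsOfRepr m p ⊆ WordsOfRepr m (fun j => T (p j)) := by
  rintro _ ⟨w, ⟨o, hpino, hword⟩, rfl⟩
  refine ⟨T o, ?_, ?_⟩
  · rw [wo_T]; exact (hpin _ _).2 hpino
  · rw [wo_T]; exact (wordof_T T ρ hletter).2 hword

lemma map_invol {ρ : Letter → Letter} (hρinv : ∀ l, ρ (ρ l) = l) (v : List Letter) :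
    List.map ρ (List.map ρ v) = v := by
  rw [List.map_map]
  simpa [Function.comp_def, hρinv] using List.map_id v

lemma words_T (T : Point → Point) (ρ : Letter → Letter)
    (hTinv : ∀ z, T (T z) = z) (hρinv : ∀ l, ρ (ρ l) = l)
    (hletter : ∀ (r : ℕ → Point) (i : ℕ) (l : Letter),
      LetterIs (fun j => T (r j)) i (ρ l) ↔ LetterIs r i l)
    (hpin : ∀ (r : ℕ → Point) (m : ℕ), IsPinSeq (fun j => T (r j)) m ↔ IsPinSeq r m)
    {m : ℕ} {p : ℕ → Point} :
    WordsOfRepr m (fun j => T (p j)) = List.map ρ '' WordsOfRepr m p := by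
  have hTT : (fun j => T ((fun j' => T (p j')) j)) = p := by
    funext j; exact hTinv _
  apply Set.Subset.antisymm
  · intro w hw
    have h1 : List.map ρ '' WordsOfRepr m (fun j => T (p j)) ⊆ WordsOfRepr m p := by
      have := sub_T T ρ hletter hpin (p := fun j => T (p j)) (m := m)
      rwa [hTT] at this
    exact ⟨List.map ρ w, h1 ⟨w, hw, rfl⟩, map_invol hρinv w⟩
  · exact sub_T T ρ hletter hpin

lemma countgoal_T (T : Point → Point) (ρ : Letter → Letter)
    (hTinv : ∀ z, T (T z) = z) (hρinv : ∀ l, ρ (ρ l) = l)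
    (hletter : ∀ (r : ℕ → Point) (i : ℕ) (l : Letter),
      LetterIs (fun j => T (r j)) i (ρ l) ↔ LetterIs r i l)
    (hpin : ∀ (r : ℕ → Point) (m : ℕ), IsPinSeq (fun j => T (r j)) m ↔ IsPinSeq r m)
    (hsep : ∀ (r : ℕ → Point) (i : ℕ), SepCond (fun j => T (r j)) i ↔ SepCond r i)
    {m : ℕ} {p : ℕ → Point}
    (h : CountGoal m (fun j => T (p j))) : CountGoal m p := by
  have hρi : Function.Injective ρ := fun a b hab => by rw [← hρinv a, hab, hρinv]
  have hn : (WordsOfRepr m (fun j => T (p j))).ncard = (WordsOfRepr m p).ncard := by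
    rw [words_T T ρ hTinv hρinv hletter hpin]
    exact Set.ncard_image_of_injective _ (List.map_injective_iff.2 hρi)
  constructor
  · rintro ⟨h3, hs⟩
    rw [← hn]
    exact h.1 ⟨h3, (hsep p 2).2 hs⟩
  · intro hns
    rw [← hn]
    exact h.2 (fun hc => hns ⟨hc.1, (hsep p 2).1 hc.2⟩)

lemma TX_invol : ∀ z : Point, TX (TX z) = z := fun z => by simp [TX]
lemma TY_invol : ∀ z : Point, TY (TY z) = z := fun z => by simp [TY]
lemma TS_invol : ∀ z : Point, TS (TS z) = z := fun z => rfl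
lemma rX_invol : ∀ l, rX (rX l) = l := by intro l; cases l <;> rfl
lemma rY_invol : ∀ l, rY (rY l) = l := by intro l; cases l <;> rfl
lemma rS_invol : ∀ l, rS (rS l) = l := by intro l; cases l <;> rfl

lemma countgoal_TX {m : ℕ} {p : ℕ → Point}
    (h : CountGoal m (fun j => TX (p j))) : CountGoal m p :=
  countgoal_T TX rX TX_invol rX_invol (fun _ _ l => letteris_TX l)
    (fun _ _ => pinseq_TX) (fun _ _ => sep_TX) h

lemma countgoal_TY {m : ℕ} {p : ℕ → Point}
    (h : CountGoal m (fun j => TY (p j))) : CountGoal m p :=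
  countgoal_T TY rY TY_invol rY_invol (fun _ _ l => letteris_TY l)
    (fun _ _ => pinseq_TY) (fun _ _ => sep_TY) h

lemma countgoal_TS {m : ℕ} {p : ℕ → Point}
    (h : CountGoal m (fun j => TS (p j))) : CountGoal m p :=
  countgoal_T TS rS TS_invol rS_invol (fun _ _ l => letteris_TS l)
    (fun _ _ => pinseq_TS) (fun _ _ => sep_TS) h

end Sym


section Main

lemma count_quad1 {n : ℕ} {p : ℕ → Point} (hn : 2 ≤ n) (hps : IsPinSeq p n)
    (ha : (p 0).1 < (p 1).1) (hb : (p 0).2 < (p 1).2) : CountGoal n p := by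
  by_cases h3 : 3 ≤ n
  · have hp2 := hps.2 2 (by omega) (by omega)
    rcases hp2.2 with hs | hind
    · rcases hs with hV | hH
      · exact ⟨fun _ => count6 h3 hps ha hb hV, fun hns => absurd ⟨h3, Or.inl hV⟩ hns⟩
      · have hps' : IsPinSeq (fun j => TS (p j)) n := pinseq_TS.2 hps
        have hV' : VLineSep (fun j => TS (p j)) 2 := hH
        have hcg : CountGoal n (fun j => TS (p j)) :=
          ⟨fun _ => count6 h3 hps' hb ha hV',
           fun hns => absurd ⟨h3, Or.inl hV'⟩ hns⟩
        exact countgoal_TS hcg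
    · refine ⟨fun hc => absurd hc.2 (fun hs' => sep2_not_indep hs' hind), fun _ => ?_⟩
      exact count8' hn hps ha hb (fun _ => hind)
  · have hn2 : n = 2 := by omega
    refine ⟨fun hc => by omega, fun _ => ?_⟩
    exact count8' hn hps ha hb (fun h => absurd h (by omega))

lemma main_count {n : ℕ} {p : ℕ → Point} (hn : 2 ≤ n) (hps : IsPinSeq p n) :
    CountGoal n p := by
  have hdx : (p 0).1 ≠ (p 1).1 := dist_x hps (by omega) (by omega) (by omega)
  have hdy : (p 0).2 ≠ (p 1).2 := dist_y hps (by omega) (by omega) (by omega)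
  rcases lt_or_gt_of_ne hdx with hx | hx <;> rcases lt_or_gt_of_ne hdy with hy | hy
  · exact count_quad1 hn hps hx hy
  · exact countgoal_TY (count_quad1 hn (pinseq_TY.2 hps) hx (neg_lt_neg_iff.2 hy))
  · exact countgoal_TX (count_quad1 hn (pinseq_TX.2 hps) (neg_lt_neg_iff.2 hx) hy)
  · exact countgoal_TX (countgoal_TY (count_quad1 hn (pinseq_TY.2 (pinseq_TX.2 hps))
      (neg_lt_neg_iff.2 hx) (neg_lt_neg_iff.2 hy)))

end Main


/-- Counting the pin words associated with a fixed pin representation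
over all admissible origins: exactly 6 if `n ≥ 3` and the third pin satisfies the
separation condition, exactly 8 otherwise; any two such pin words agree at every
position `i ≥ 3`; and every pin-permutation of size at least 2 has at least 6 pin words. -/
theorem statement_0 :
    (∀ (n : ℕ), 2 ≤ n → ∀ (σ : Equiv.Perm (Fin n)) (p : ℕ → Point), IsPinRepr σ p →
      ((3 ≤ n ∧ SepCond p 2) → (WordsOfRepr n p).ncard = 6) ∧
      (¬(3 ≤ n ∧ SepCond p 2) → (WordsOfRepr n p).ncard = 8) ∧
      (∀ w ∈ WordsOfRepr n p, ∀ w' ∈ WordsOfRepr n p,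
        ∀ i, 2 ≤ i → i < n → w.getD i Letter.U = w'.getD i Letter.U)) ∧
    (∀ (m : ℕ), 2 ≤ m → ∀ τ : Equiv.Perm (Fin m), IsPinPerm τ →
      ∃ S : Finset (List Letter), ↑S ⊆ PinWords τ ∧ 6 ≤ S.card) := by
  constructor
  · intro n hn σ p hrepr
    obtain ⟨f, hf⟩ := hrepr
    have hps : IsPinSeq p n := hf.1
    have hc := main_count hn hps
    exact ⟨hc.1, hc.2, fun w hw w' hw' => words_agree hw hw'⟩
  · intro m hm τ hperm
    obtain ⟨p, hrepr⟩ := hperm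
    obtain ⟨f, hf⟩ := id hrepr
    have hps : IsPinSeq p m := hf.1
    have hc := main_count hm hps
    have h6 : 6 ≤ (WordsOfRepr m p).ncard := by
      by_cases hcase : 3 ≤ m ∧ SepCond p 2
      · rw [hc.1 hcase]
      · rw [hc.2 hcase]; omega
    have hfin : (WordsOfRepr m p).Finite :=
      Set.finite_of_ncard_ne_zero (by omega)
    refine ⟨hfin.toFinset, ?_, ?_⟩
    · intro w hw
      have hw' : w ∈ WordsOfRepr m p := by
        simpa [Set.Finite.mem_toFinset] using hw
      obtain ⟨o, hpin, hword⟩ := hw'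
      exact ⟨p, o, hrepr, hpin, hword⟩
    · rwa [Set.ncard_eq_toFinset_card _ hfin] at h6

end PinStmt
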